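/- arXiv:2210.14489 — 7 statements merged into one kernel-verified Lean document; each statement's English description precedes it below -/
import Mathlib

section
/- (Differential privacy impossibility for standard network flow.) Let G=(V,E) be a finite directed graph, T>0, and let Λ, Λ' : V×V → ℝ≥0 and (o*,d*) ∈ V×V with o* ≠ d* be such that Λ'(o,d) = Λ(o,d) for all (o,d) ≠ (o*,d*), Λ(o*,d*) = 0, and Λ'(o*,d*) = 1/T. Let M be a Markov kernel from demand matrices to the space ℝ^{(V×V)×E} (with its Borel σ-algebra) such that for every demand matrix Λ'' the probability measure M(Λ'') assigns measure 1 to the set of families feasible for the standard network flow problem with demand Λ''. Then for every ε ≥ 0 and every δ ∈ [0,1) there exists a measurable set S ⊆ ℝ^{(V×V)×E} with M(Λ)(S) > e^ε·M(Λ')(S) + δ; in particular M cannot satisfy the (ε,δ)-differential privacy inequality on the pair (Λ, Λ') for any δ < 1. -/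
open Finset MeasureTheory ProbabilityTheory

/-- A family of commodity flows `x` (one nonnegative vector on the edge set `E`
for each ordered pair of vertices) is feasible for the standard network flow
problem with demand matrix `Λ`. -/
def Feasible {V : Type*} [Fintype V] [DecidableEq V] (E : Finset (V × V))
    (Λ : V × V → ℝ) (x : V × V → V × V → ℝ) : Prop :=
  (∀ c e, 0 ≤ x c e) ∧
  ∀ c : V × V, ∀ u : V,
    ((∑ v : V, if (u, v) ∈ E then x c (u, v) else 0)
      - ∑ w : V, if (w, u) ∈ E then x c (w, u) else 0)
    = Λ c * (if u = c.1 then 1 else 0) - Λ c * (if u = c.2 then 1 else 0)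

/-- **Differential privacy impossibility for standard network flow.**
If a Markov kernel `M` from demand matrices to families of commodity flows always
returns a feasible solution (with probability one), then for adjacent demands
`Λ, Λ'` differing by a single `(o*,d*)` request, for every `ε ≥ 0` and `δ ∈ [0,1)`
there is a measurable event `S` witnessing the failure of the
`(ε,δ)`-differential privacy inequality. -/
theorem standard_network_flow_not_differentially_private
    {V : Type*} [Fintype V] [DecidableEq V] (E : Finset (V × V))
    (T : ℝ) (hT : 0 < T)
    (Λ Λ' : V × V → ℝ) (hΛ : ∀ p, 0 ≤ Λ p) (hΛ' : ∀ p, 0 ≤ Λ' p)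
    (od : V × V) (hod : od.1 ≠ od.2)
    (hagree : ∀ p, p ≠ od → Λ' p = Λ p)
    (h0 : Λ od = 0) (h1 : Λ' od = 1 / T)
    (M : Kernel (V × V → ℝ) (V × V → V × V → ℝ))
    (hM : IsMarkovKernel M)
    (hfeas : ∀ Λ'' : V × V → ℝ, (∀ p, 0 ≤ Λ'' p) →
      M Λ'' {x | Feasible E Λ'' x} = 1) :
    ∀ ε δ : ℝ, 0 ≤ ε → 0 ≤ δ → δ < 1 →
      ∃ S : Set (V × V → V × V → ℝ), MeasurableSet S ∧
        M Λ S > ENNReal.ofReal (Real.exp ε) * M Λ' S + ENNReal.ofReal δ := by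
  intro ε δ hε hδ0 hδ1
  refine ⟨{x | Feasible E Λ x}, ?_, ?_⟩
  · -- measurability
    have : {x : V × V → V × V → ℝ | Feasible E Λ x} =
        (⋂ c, ⋂ e, {x : V × V → V × V → ℝ | 0 ≤ x c e}) ∩
        (⋂ c, ⋂ u, {x : V × V → V × V → ℝ |
          ((∑ v : V, if (u, v) ∈ E then x c (u, v) else 0)
            - ∑ w : V, if (w, u) ∈ E then x c (w, u) else 0)
          = Λ c * (if u = c.1 then 1 else 0) - Λ c * (if u = c.2 then 1 else 0)}) := by
      ext x
      simp [Feasible, Set.mem_iInter]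
    rw [this]
    refine MeasurableSet.inter ?_ ?_
    · refine MeasurableSet.iInter fun c => MeasurableSet.iInter fun e => ?_
      exact measurableSet_le measurable_const
        ((measurable_pi_apply e).comp (measurable_pi_apply c))
    · refine MeasurableSet.iInter fun c => MeasurableSet.iInter fun u => ?_
      apply measurableSet_eq_fun _ measurable_const
      apply Measurable.sub <;>
      · apply Finset.measurable_sum
        intro v _
        split
        · exact (measurable_pi_apply _).comp (measurable_pi_apply c)
        · exact measurable_const
  · -- the DP inequality fails
    have hdisj : {x : V × V → V × V → ℝ | Feasible E Λ x} ⊆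
        {x | Feasible E Λ' x}ᶜ := by
      intro x hx hx'
      have e1 := hx.2 od od.1
      have e2 := hx'.2 od od.1
      rw [e1] at e2
      simp [h0, if_neg hod] at e2
      rw [h1] at e2
      have : (1 : ℝ) / T ≠ 0 := by positivity
      exact this e2.symm
    have hfeasmeas : MeasurableSet {x : V × V → V × V → ℝ | Feasible E Λ' x} := by
      have : {x : V × V → V × V → ℝ | Feasible E Λ' x} =
          (⋂ c, ⋂ e, {x : V × V → V × V → ℝ | 0 ≤ x c e}) ∩
          (⋂ c, ⋂ u, {x : V × V → V × V → ℝ |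
            ((∑ v : V, if (u, v) ∈ E then x c (u, v) else 0)
              - ∑ w : V, if (w, u) ∈ E then x c (w, u) else 0)
            = Λ' c * (if u = c.1 then 1 else 0) - Λ' c * (if u = c.2 then 1 else 0)}) := by
        ext x
        simp [Feasible, Set.mem_iInter]
      rw [this]
      refine MeasurableSet.inter ?_ ?_
      · refine MeasurableSet.iInter fun c => MeasurableSet.iInter fun e => ?_
        exact measurableSet_le measurable_const
          ((measurable_pi_apply e).comp (measurable_pi_apply c))
      · refine MeasurableSet.iInter fun c => MeasurableSet.iInter fun u => ?_
        apply measurableSet_eq_fun _ measurable_const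
        apply Measurable.sub <;>
        · apply Finset.measurable_sum
          intro v _
          split
          · exact (measurable_pi_apply _).comp (measurable_pi_apply c)
          · exact measurable_const
    haveI : IsProbabilityMeasure (M Λ') := hM.isProbabilityMeasure Λ'
    haveI : IsProbabilityMeasure (M Λ) := hM.isProbabilityMeasure Λ
    have hzero : M Λ' {x | Feasible E Λ x} = 0 := by
      refine le_antisymm ?_ zero_le
      calc M Λ' {x | Feasible E Λ x} ≤ M Λ' {x | Feasible E Λ' x}ᶜ :=
            measure_mono hdisj
        _ = 1 - M Λ' {x | Feasible E Λ' x} := by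
            rw [measure_compl hfeasmeas (measure_ne_top _ _), measure_univ]
        _ = 0 := by rw [hfeas Λ' hΛ']; simp
    rw [hfeas Λ hΛ, hzero, mul_zero, zero_add]
    exact ENNReal.ofReal_lt_one.mpr hδ1
end

section
/- Let 0 < α ≤ β and define the step sizes η_k = min(1/(α(k+1)), min(1,2α)/β) for k ∈ ℕ. Then for all natural numbers t and N with t < N, η_t · exp(−α·∑_{k=t+1}^{N−1} η_k) ≤ 2/(αN). -/
lemma stepsize_telescope_log (m n : ℕ) (h : m ≤ n) :
    ∑ j ∈ Finset.Ico m n, (Real.log (j+1) - Real.log j) = Real.log n - Real.log m := by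
  have key : ∀ p : ℕ, ∑ j ∈ Finset.range p, (Real.log (j+1) - Real.log j) = Real.log p := by
    intro p
    induction p with
    | zero => simp
    | succ q ih => rw [Finset.sum_range_succ, ih]; push_cast; ring
  rw [Finset.sum_Ico_eq_sub _ h, key, key]

lemma stepsize_harmonic_lb (m n : ℕ) (hm : 1 ≤ m) (hmn : m ≤ n) :
    Real.log n - Real.log m ≤ ∑ j ∈ Finset.Ico m n, (1:ℝ)/j := by
  rw [← stepsize_telescope_log m n hmn]
  apply Finset.sum_le_sum
  intro j hj
  have hj1 : 1 ≤ j := le_trans hm (Finset.mem_Ico.mp hj).1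
  have hjpos : (0:ℝ) < j := by exact_mod_cast hj1
  have h1 : Real.log (((j:ℝ)+1)/j) ≤ ((j:ℝ)+1)/(j:ℝ) - 1 :=
    Real.log_le_sub_one_of_pos (by positivity)
  rw [Real.log_div (by positivity) (by positivity)] at h1
  have h2 : ((j:ℝ)+1)/j - 1 = 1/j := by field_simp; ring
  linarith

lemma stepsize_key_sum (a b : ℕ) (hab : a ≤ b) :
    Real.log (b+1) - Real.log (a+1) ≤ ∑ k ∈ Finset.Ico a b, (1:ℝ)/(k+1) := by
  have hre : ∑ k ∈ Finset.Ico a b, (1:ℝ)/(k+1)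
      = ∑ j ∈ Finset.Ico (a+1) (b+1), (1:ℝ)/j := by
    rw [← Finset.sum_Ico_add' (fun j : ℕ => (1:ℝ)/j) a b (c := 1)]
    push_cast
    rfl
  rw [hre]
  have := stepsize_harmonic_lb (a+1) (b+1) (Nat.le_add_left 1 a)
    (Nat.succ_le_succ hab)
  push_cast at this ⊢
  linarith

set_option maxHeartbeats 1000000 in
/-- With step sizes `η_k = min(1/(α(k+1)), min(1,2α)/β)` for `0 < α ≤ β`, for all
`t < N` we have `η_t · exp(-α ∑_{k=t+1}^{N-1} η_k) ≤ 2/(αN)`. -/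
theorem stepsize_decay_bound (α β : ℝ) (hα : 0 < α) (hαβ : α ≤ β)
    (η : ℕ → ℝ)
    (hη : ∀ k : ℕ, η k = min (1 / (α * (k + 1))) (min 1 (2 * α) / β))
    (t N : ℕ) (htN : t < N) :
    η t * Real.exp (-α * ∑ k ∈ Finset.Ico (t + 1) N, η k) ≤ 2 / (α * N) := by
  have hβ : 0 < β := lt_of_lt_of_le hα hαβ
  set c : ℝ := min 1 (2 * α) with hc_def
  have hc : 0 < c := lt_min one_pos (by linarith)
  have hc1 : c ≤ 1 := min_le_left _ _
  have hN1 : (1:ℝ) ≤ N := by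
    have : 1 ≤ N := Nat.one_le_iff_ne_zero.mpr (by omega)
    exact_mod_cast this
  have htN' : (t:ℝ) + 1 ≤ N := by exact_mod_cast htN
  have htNle : t + 1 ≤ N := htN
  set S : ℝ := ∑ k ∈ Finset.Ico (t + 1) N, η k with hS_def
  by_cases h1 : 1 / (α * (t + 1)) ≤ c / β
  · -- Case 1: η t = 1/(α(t+1)), and all later steps are 1/(α(k+1))
    have hηt : η t = 1 / (α * (t + 1)) := by rw [hη]; exact min_eq_left h1
    have hsum : S = ∑ k ∈ Finset.Ico (t + 1) N, 1 / (α * ((k:ℝ) + 1)) := by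
      apply Finset.sum_congr rfl
      intro k hk
      rw [hη]
      apply min_eq_left
      refine le_trans ?_ h1
      have htk : (t:ℝ) ≤ k := by exact_mod_cast le_of_lt (Finset.mem_Ico.mp hk).1
      apply one_div_le_one_div_of_le (by positivity)
      nlinarith
    have hSlb : (Real.log ((N:ℝ)+1) - Real.log ((t:ℝ)+2)) / α ≤ S := by
      rw [hsum]
      have hkey := stepsize_key_sum (t+1) N htNle
      push_cast at hkey
      have h22 : ((t:ℝ) + 1 + 1) = (t:ℝ) + 2 := by ring
      rw [h22] at hkey
      have hre : ∑ k ∈ Finset.Ico (t + 1) N, 1 / (α * ((k:ℝ) + 1))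
          = α⁻¹ * ∑ k ∈ Finset.Ico (t + 1) N, (1:ℝ) / ((k:ℝ) + 1) := by
        rw [Finset.mul_sum]
        apply Finset.sum_congr rfl
        intro k _
        rw [one_div, mul_inv, ← one_div, inv_eq_one_div]
      rw [hre, div_eq_inv_mul]
      exact mul_le_mul_of_nonneg_left hkey (by positivity)
    have hexp : Real.exp (-α * S) ≤ ((t:ℝ)+2)/((N:ℝ)+1) := by
      have h2 : -α * S ≤ Real.log ((t:ℝ)+2) - Real.log ((N:ℝ)+1) := by
        have := mul_le_mul_of_nonneg_left hSlb (le_of_lt hα)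
        rw [mul_div_cancel₀ _ (ne_of_gt hα)] at this
        linarith
      calc Real.exp (-α * S) ≤ Real.exp (Real.log ((t:ℝ)+2) - Real.log ((N:ℝ)+1)) :=
            Real.exp_le_exp.mpr h2
        _ = ((t:ℝ)+2)/((N:ℝ)+1) := by
            rw [Real.exp_sub, Real.exp_log (by positivity), Real.exp_log (by positivity)]
    have hfin : 1 / (α * (t + 1)) * (((t:ℝ)+2)/((N:ℝ)+1)) ≤ 2 / (α * N) := by
      rw [div_mul_div_comm, div_le_div_iff₀ (by positivity) (by positivity)]
      have h3 : (0:ℝ) ≤ α * t * N := by positivity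
      have h4 : (0:ℝ) ≤ α * t := by positivity
      nlinarith
    calc η t * Real.exp (-α * S) ≤ 1 / (α * (t + 1)) * (((t:ℝ)+2)/((N:ℝ)+1)) := by
          rw [hηt]
          exact mul_le_mul_of_nonneg_left hexp (by positivity)
      _ ≤ 2 / (α * N) := hfin
  · -- Case 2: η t = c/β
    push_neg at h1
    have hηt : η t = c / β := by rw [hη]; exact min_eq_right (le_of_lt h1)
    have hαct : α * c * ((t:ℝ) + 1) < β := by
      rw [div_lt_div_iff₀ hβ (by positivity)] at h1
      nlinarith
    by_cases h2 : α * c * N ≤ β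
    · -- Subcase 2a: all steps in range equal c/β
      have hsum : S = ((N:ℝ) - ((t:ℝ)+1)) * (c / β) := by
        rw [hS_def]
        have hall : ∀ k ∈ Finset.Ico (t + 1) N, η k = c / β := by
          intro k hk
          rw [hη]
          apply min_eq_right
          have hkN : (k:ℝ) + 1 ≤ N := by exact_mod_cast (Finset.mem_Ico.mp hk).2
          rw [div_le_div_iff₀ hβ (by positivity), one_mul]
          nlinarith
        rw [Finset.sum_congr rfl hall, Finset.sum_const, Nat.card_Ico, nsmul_eq_mul]
        congr 1
        rw [Nat.cast_sub htNle]
        push_cast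
        ring
      set D : ℝ := (N:ℝ) - ((t:ℝ)+1) with hD_def
      have hD : 0 ≤ D := by rw [hD_def]; linarith
      have hx : 0 ≤ α * c * D / β := by positivity
      have hexp : Real.exp (-α * S) ≤ 1 / (1 + α * c * D / β) := by
        rw [hsum]
        have harg : -α * (D * (c/β)) = -(α * c * D / β) := by ring
        rw [harg, Real.exp_neg, one_div]
        apply inv_anti₀ (by linarith)
        have := Real.add_one_le_exp (α * c * D / β)
        linarith
      have hfin : (c / β) * (1 / (1 + α * c * D / β)) ≤ 2 / (α * N) := by
        have hden : 1 + α * c * D / β = (β + α * c * D) / β := by field_simp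
        have he : (c / β) * (1 / (1 + α * c * D / β)) = c / (β + α * c * D) := by
          rw [hden, one_div_div]
          rw [div_mul_div_comm]
          rw [div_eq_div_iff (by positivity) (by positivity)]
          ring
        rw [he, div_le_div_iff₀ (by positivity) (by positivity)]
        have h5 : (0:ℝ) ≤ α * c * D := by positivity
        nlinarith
      calc η t * Real.exp (-α * S) ≤ (c / β) * (1 / (1 + α * c * D / β)) := by
            rw [hηt]
            exact mul_le_mul_of_nonneg_left hexp (by positivity)
        _ ≤ 2 / (α * N) := hfin
    · -- Subcase 2b
      push_neg at h2
      set s : ℕ := ⌊β / (α * c)⌋₊ with hs_def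
      have hts : t + 1 ≤ s := by
        apply Nat.le_floor
        rw [le_div_iff₀ (by positivity)]
        push_cast
        nlinarith
      have hsN : s < N := by
        rw [hs_def]
        apply (Nat.floor_lt (by positivity)).mpr
        rw [div_lt_iff₀ (by positivity)]
        nlinarith
      have htsr : (t:ℝ) + 1 ≤ s := by exact_mod_cast hts
      have hsr : (s:ℝ) + 1 ≤ N := by exact_mod_cast hsN
      have hsle : α * c * (s:ℝ) ≤ β := by
        have hfl : (s:ℝ) ≤ β / (α * c) := Nat.floor_le (by positivity)
        have := (le_div_iff₀ (show (0:ℝ) < α * c by positivity)).mp hfl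
        nlinarith
      have hs1 : β < α * c * ((s:ℝ) + 1) := by
        have hfl := Nat.lt_floor_add_one (β / (α * c))
        rw [← hs_def, div_lt_iff₀ (show (0:ℝ) < α * c by positivity)] at hfl
        nlinarith
      -- split the sum
      have hsplit : S = ∑ k ∈ Finset.Ico (t + 1) s, η k + ∑ k ∈ Finset.Ico s N, η k := by
        rw [hS_def, ← Finset.sum_Ico_consecutive _ hts (le_of_lt hsN)]
      have hsum1 : ∑ k ∈ Finset.Ico (t + 1) s, η k = ((s:ℝ) - ((t:ℝ)+1)) * (c / β) := by
        have hall : ∀ k ∈ Finset.Ico (t + 1) s, η k = c / β := by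
          intro k hk
          rw [hη]
          apply min_eq_right
          have hks : (k:ℝ) + 1 ≤ s := by exact_mod_cast (Finset.mem_Ico.mp hk).2
          rw [div_le_div_iff₀ hβ (by positivity), one_mul]
          nlinarith
        rw [Finset.sum_congr rfl hall, Finset.sum_const, Nat.card_Ico, nsmul_eq_mul]
        congr 1
        rw [Nat.cast_sub hts]
        push_cast
        ring
      have hsum2 : (Real.log ((N:ℝ)+1) - Real.log ((s:ℝ)+1)) / α
          ≤ ∑ k ∈ Finset.Ico s N, η k := by
        have heq : ∑ k ∈ Finset.Ico s N, η k
            = ∑ k ∈ Finset.Ico s N, 1 / (α * ((k:ℝ) + 1)) := by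
          apply Finset.sum_congr rfl
          intro k hk
          rw [hη]
          apply min_eq_left
          have hks : (s:ℝ) ≤ k := by exact_mod_cast (Finset.mem_Ico.mp hk).1
          rw [div_le_div_iff₀ (by positivity) hβ, one_mul]
          nlinarith
        rw [heq]
        have hkey := stepsize_key_sum s N (le_of_lt hsN)
        push_cast at hkey
        have hre : ∑ k ∈ Finset.Ico s N, 1 / (α * ((k:ℝ) + 1))
            = α⁻¹ * ∑ k ∈ Finset.Ico s N, (1:ℝ) / ((k:ℝ) + 1) := by
          rw [Finset.mul_sum]
          apply Finset.sum_congr rfl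
          intro k _
          rw [one_div, mul_inv, ← one_div, inv_eq_one_div]
        rw [hre, div_eq_inv_mul]
        exact mul_le_mul_of_nonneg_left hkey (by positivity)
      set D : ℝ := (s:ℝ) - ((t:ℝ)+1) with hD_def
      have hD : 0 ≤ D := by rw [hD_def]; linarith
      set x : ℝ := α * c * D / β with hx_def
      have hx : 0 ≤ x := by rw [hx_def]; positivity
      have hexp : Real.exp (-α * S) ≤ (1 / (1 + x)) * (((s:ℝ)+1)/((N:ℝ)+1)) := by
        have harg : -α * S ≤ -x + (Real.log ((s:ℝ)+1) - Real.log ((N:ℝ)+1)) := by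
          rw [hsplit, hsum1]
          have hm := mul_le_mul_of_nonneg_left hsum2 (le_of_lt hα)
          rw [mul_div_cancel₀ _ (ne_of_gt hα)] at hm
          have hexpand : -α * (D * (c/β) + ∑ k ∈ Finset.Ico s N, η k)
              = -(α * c * D / β) - α * ∑ k ∈ Finset.Ico s N, η k := by
            ring
          rw [hexpand, hx_def]
          linarith
        calc Real.exp (-α * S) ≤ Real.exp (-x + (Real.log ((s:ℝ)+1) - Real.log ((N:ℝ)+1))) :=
              Real.exp_le_exp.mpr harg
          _ = Real.exp (-x) * (((s:ℝ)+1)/((N:ℝ)+1)) := by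
              rw [Real.exp_add, Real.exp_sub, Real.exp_log (by positivity),
                Real.exp_log (by positivity)]
          _ ≤ (1 / (1 + x)) * (((s:ℝ)+1)/((N:ℝ)+1)) := by
              apply mul_le_mul_of_nonneg_right _ (by positivity)
              rw [Real.exp_neg, one_div]
              apply inv_anti₀ (by linarith)
              have := Real.add_one_le_exp x
              linarith
      have hfin : (c / β) * ((1 / (1 + x)) * (((s:ℝ)+1)/((N:ℝ)+1))) ≤ 2 / (α * N) := by
        have hden : 1 + x = (β + α * c * D) / β := by rw [hx_def]; field_simp
        have he : (c / β) * ((1 / (1 + x)) * (((s:ℝ)+1)/((N:ℝ)+1)))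
            = c * ((s:ℝ)+1) / ((β + α * c * D) * ((N:ℝ)+1)) := by
          rw [hden, one_div_div]
          rw [div_mul_div_comm, div_mul_div_comm]
          rw [div_eq_div_iff (by positivity) (by positivity)]
          ring
        rw [he, div_le_div_iff₀ (by positivity) (by positivity)]
        have h5 : α * c * ((t:ℝ)+1) ≤ α * c * s :=
          mul_le_mul_of_nonneg_left htsr (by positivity)
        have h6 : α * c * 1 ≤ α * c * ((t:ℝ)+1) :=
          mul_le_mul_of_nonneg_left (by push_cast; linarith [Nat.cast_nonneg (α := ℝ) t])
            (by positivity)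
        have hkey : α * c * ((s:ℝ)+1) ≤ 2*β + 2*(α*c*D) := by
          rw [hD_def]
          nlinarith
        have hkeyN := mul_le_mul_of_nonneg_right hkey (show (0:ℝ) ≤ N by linarith)
        have h7 : (0:ℝ) ≤ α * c * D := by positivity
        nlinarith
      calc η t * Real.exp (-α * S)
          ≤ (c / β) * ((1 / (1 + x)) * (((s:ℝ)+1)/((N:ℝ)+1))) := by
            rw [hηt]
            exact mul_le_mul_of_nonneg_left hexp (by positivity)
        _ ≤ 2 / (α * N) := hfin
end

section
/- (Derivative bound for gradient descent iterates with respect to a single data point.) Let d ≥ 1, let α, β, C > 0 with α ≤ β, and let F : ℝᵈ × ℝ → ℝ be twice continuously differentiable such that for every (x, s): (i) the Hessian H(x,s) of F(·,s) at x satisfies α‖v‖₂² ≤ vᵀH(x,s)v ≤ β‖v‖₂² for all v ∈ ℝᵈ, and (ii) ‖∂_s ∇_x F(x,s)‖₂ ≤ C. Fix N ≥ 1, an index t with 1 ≤ t ≤ N, real numbers λ₁,…,λ_N, a point x₀ ∈ ℝᵈ, and step sizes η_k = min(1/(α(k+1)), min(1,2α)/β). For s ∈ ℝ define iterates y₀(s)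 = x₀ and y_k(s) = y_{k−1}(s) − η_{k−1}·∇_x F(y_{k−1}(s), μ_k(s)) for 1 ≤ k ≤ N, where μ_k(s) = λ_k for k ≠ t and μ_t(s) = s. Then the map s ↦ y_N(s) is differentiable and ‖dy_N/ds (s)‖₂ ≤ min( C·min(1,2α)/β , 2C/(αN) ) for every s ∈ ℝ. -/
open scoped RealInnerProductSpace
open InnerProductSpace

section helpers
variable {E : Type*} [NormedAddCommGroup E] [InnerProductSpace ℝ E] [CompleteSpace E]

lemma gd_cs_psd (T : E → E) (hsym : ∀ u v, ⟪T u, v⟫ = ⟪T v, u⟫)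
    (hadd : ∀ u v, T (u + v) = T u + T v) (hsmul : ∀ (c : ℝ) u, T (c • u) = c • T u)
    (hpos : ∀ v, 0 ≤ ⟪T v, v⟫) (u w : E) :
    ⟪T u, w⟫ ^ 2 ≤ ⟪T u, u⟫ * ⟪T w, w⟫ := by
  have h : ∀ x : ℝ, 0 ≤ ⟪T w, w⟫ * (x * x) + (2 * ⟪T u, w⟫) * x + ⟪T u, u⟫ := by
    intro x
    have h0 := hpos (u + x • w)
    rw [hadd, hsmul] at h0
    have expand : ⟪T u + x • T w, u + x • w⟫
        = ⟪T u, u⟫ + x * ⟪T u, w⟫ + x * ⟪T w, u⟫ + x * x * ⟪T w, w⟫ := by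
      simp only [inner_add_left, inner_add_right, real_inner_smul_left, real_inner_smul_right]
      ring
    rw [expand] at h0
    rw [hsym w u] at h0
    linarith
  have hd := discrim_le_zero h
  rw [discrim] at hd
  nlinarith [hd]

lemma gd_contraction (H : E →L[ℝ] E) (hsym : ∀ u v, ⟪H u, v⟫ = ⟪H v, u⟫)
    (a b η : ℝ) (hη0 : 0 ≤ η) (hηβ : η * b ≤ 1) (hηα : η * a ≤ 1)
    (hlo : ∀ v, a * ‖v‖ ^ 2 ≤ ⟪H v, v⟫) (hhi : ∀ v, ⟪H v, v⟫ ≤ b * ‖v‖ ^ 2)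
    (v : E) : ‖v - η • H v‖ ≤ (1 - η * a) * ‖v‖ := by
  set T : E → E := fun u => u - η • H u with hT
  have hsymT : ∀ u w, ⟪T u, w⟫ = ⟪T w, u⟫ := by
    intro u w
    simp only [hT, inner_sub_left, real_inner_smul_left, hsym u w, real_inner_comm u w]
  have haddT : ∀ u w, T (u + w) = T u + T w := by
    intro u w; simp only [hT, map_add, smul_add]; abel
  have hsmulT : ∀ (c : ℝ) u, T (c • u) = c • T u := by
    intro c u; simp only [hT, map_smul, smul_sub, smul_comm c η]
  have hexp : ∀ u, ⟪T u, u⟫ = ‖u‖ ^ 2 - η * ⟪H u, u⟫ := by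
    intro u
    simp only [hT, inner_sub_left, real_inner_smul_left, real_inner_self_eq_norm_sq]
  have hub : ∀ u, ⟪T u, u⟫ ≤ (1 - η * a) * ‖u‖ ^ 2 := by
    intro u; rw [hexp u]; nlinarith [hlo u, sq_nonneg ‖u‖]
  have hposT : ∀ u, 0 ≤ ⟪T u, u⟫ := by
    intro u; rw [hexp u]; nlinarith [hhi u, sq_nonneg ‖u‖]
  have hcs := gd_cs_psd T hsymT haddT hsmulT hposT v (T v)
  have h1 : ⟪T v, T v⟫ = ‖T v‖ ^ 2 := real_inner_self_eq_norm_sq _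
  rw [h1] at hcs
  have hc : 0 ≤ 1 - η * a := by linarith
  have h2 := hub v
  have h3 := hub (T v)
  have h4 := hposT v
  have h5 := hposT (T v)
  have key : (‖T v‖ ^ 2) ^ 2 ≤ ((1 - η * a) * ‖v‖) ^ 2 * ‖T v‖ ^ 2 := by
    nlinarith [sq_nonneg ‖v‖, sq_nonneg ‖T v‖]
  rcases eq_or_lt_of_le (norm_nonneg (T v)) with h0 | h0
  · rw [← h0]; positivity
  · have h6 : ‖T v‖ ^ 2 ≤ ((1 - η * a) * ‖v‖) ^ 2 := by nlinarith [h0]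
    have hcv : 0 ≤ (1 - η * a) * ‖v‖ := by positivity
    nlinarith [h0, hcv]

lemma gd_grad_eq (f : E × ℝ → ℝ) (hf : ContDiff ℝ 2 f) (p : E × ℝ) :
    gradient (fun z => f (z, p.2)) p.1
      = (toDual ℝ E).symm ((fderiv ℝ f p).comp (ContinuousLinearMap.inl ℝ E ℝ)) := by
  unfold gradient
  congr 1
  have h1 : HasFDerivAt f (fderiv ℝ f p) (p.1, p.2) := by
    rw [Prod.mk.eta]; exact (hf.differentiable (by norm_num) p).hasFDerivAt
  have h2 : HasFDerivAt (fun z : E => (z, p.2)) (ContinuousLinearMap.inl ℝ E ℝ) p.1 :=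
    hasFDerivAt_prodMk_left p.1 p.2
  exact (h1.comp p.1 h2).fderiv

lemma gd_G_contDiff (f : E × ℝ → ℝ) (hf : ContDiff ℝ 2 f) :
    ContDiff ℝ 1 (fun p : E × ℝ => gradient (fun z => f (z, p.2)) p.1) := by
  have heq : (fun p : E × ℝ => gradient (fun z => f (z, p.2)) p.1)
      = fun p => (toDual ℝ E).symm ((fderiv ℝ f p).comp (ContinuousLinearMap.inl ℝ E ℝ)) := by
    funext p; exact gd_grad_eq f hf p
  rw [heq]
  have hf' : ContDiff ℝ 1 (fderiv ℝ f) := hf.fderiv_right (by norm_num)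
  exact (toDual ℝ E).symm.contDiff.comp (hf'.clm_comp contDiff_const)

lemma gd_hess_symm (f : E × ℝ → ℝ) (hf : ContDiff ℝ 2 f) (s : ℝ) (x u v : E) :
    ⟪(fderiv ℝ (fun y => gradient (fun z => f (z, s)) y) x) u, v⟫
      = ⟪(fderiv ℝ (fun y => gradient (fun z => f (z, s)) y) x) v, u⟫ := by
  have hg : ContDiff ℝ 2 (fun z : E => f (z, s)) :=
    hf.comp (contDiff_id.prodMk contDiff_const)
  have heq : (fun y : E => gradient (fun z => f (z, s)) y)
      = (⇑(toDual ℝ E).symm) ∘ (fderiv ℝ (fun z : E => f (z, s))) := by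
    funext y; rfl
  rw [heq, LinearIsometryEquiv.comp_fderiv]
  simp only [ContinuousLinearMap.coe_comp', Function.comp_apply]
  show ⟪(toDual ℝ E).symm ((fderiv ℝ (fderiv ℝ fun z => f (z, s)) x) u), v⟫
      = ⟪(toDual ℝ E).symm ((fderiv ℝ (fderiv ℝ fun z => f (z, s)) x) v), u⟫
  rw [toDual_symm_apply, toDual_symm_apply]
  exact hg.contDiffAt.isSymmSndFDerivAt (by simp) u v

lemma gd_step_hasDerivAt (F : E × ℝ → ℝ) (hF : ContDiff ℝ 2 F)
    {g : ℝ → E} {m : ℝ → ℝ} {u : E} {δ s : ℝ}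
    (hg : HasDerivAt g u s) (hm : HasDerivAt m δ s) :
    HasDerivAt (fun s' => gradient (fun z => F (z, m s')) (g s'))
      ((fderiv ℝ (fun y' => gradient (fun z => F (z, m s)) y') (g s)) u
        + δ • deriv (fun r => gradient (fun z => F (z, r)) (g s)) (m s)) s := by
  have hGC1 := gd_G_contDiff F hF
  have hgm : HasDerivAt (fun s' => (g s', m s')) ((u, δ) : E × ℝ) s := hg.prodMk hm
  set D := fderiv ℝ (fun q : E × ℝ => gradient (fun z => F (z, q.2)) q.1) (g s, m s) with hD
  have hGfd : HasFDerivAt (fun q : E × ℝ => gradient (fun z => F (z, q.2)) q.1)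
      D (g s, m s) := ((hGC1.differentiable (by norm_num)) _).hasFDerivAt
  have hc : HasDerivAt (fun s' => gradient (fun z => F (z, m s')) (g s')) (D ((u, δ))) s :=
    by have := hGfd.comp_hasDerivAt s hgm; exact this
  have hx : fderiv ℝ (fun y' => gradient (fun z => F (z, m s)) y') (g s)
      = D.comp (ContinuousLinearMap.inl ℝ E ℝ) := by
    have h2 : HasFDerivAt (fun y' : E => (y', m s)) (ContinuousLinearMap.inl ℝ E ℝ) (g s) :=
      hasFDerivAt_prodMk_left _ _
    have h3 : HasFDerivAt (fun y' : E => gradient (fun z => F (z, m s)) y')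
        (D.comp (ContinuousLinearMap.inl ℝ E ℝ)) (g s) := by have := hGfd.comp (g s) h2; exact this
    exact h3.fderiv
  have hr : deriv (fun r => gradient (fun z => F (z, r)) (g s)) (m s) = D ((0 : E), (1:ℝ)) := by
    have h4 : HasDerivAt (fun r : ℝ => gradient (fun z => F (z, r)) (g s))
        (D ((0 : E), (1:ℝ))) (m s) :=
      by have := hGfd.comp_hasDerivAt (m s) ((hasDerivAt_const (m s) (g s)).prodMk (hasDerivAt_id (m s))); exact this
    exact h4.deriv
  have hsplit : D (u, δ)
      = (fderiv ℝ (fun y' => gradient (fun z => F (z, m s)) y') (g s)) u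
        + δ • deriv (fun r => gradient (fun z => F (z, r)) (g s)) (m s) := by
    rw [hx, hr]
    have h5 : ((u, δ) : E × ℝ) = (u, 0) + δ • ((0:E), (1:ℝ)) := by
      simp [Prod.ext_iff]
    rw [h5, map_add, map_smul]
    simp
  rw [← hsplit]
  exact hc


lemma gd_arith_t (α β C c ηk K : ℝ) (hα : 0 < α) (hβ : 0 < β) (hC : 0 < C)
    (hc0 : 0 < c) (hK : 1 ≤ K)
    (hη1 : ηk ≤ 1 / (α * K)) (hη2 : ηk ≤ c / β) (hη0 : 0 ≤ ηk) :
    ηk * C ≤ min (C * c / β) (2 * C / (α * (K + 1))) := by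
  refine le_min ?_ ?_
  · have h : ηk * C ≤ (c / β) * C := mul_le_mul_of_nonneg_right hη2 (le_of_lt hC)
    calc ηk * C ≤ (c / β) * C := h
      _ = C * c / β := by ring
  · have h2 : ηk * C ≤ C / (α * K) := by
      have h : ηk * C ≤ (1 / (α * K)) * C := mul_le_mul_of_nonneg_right hη1 (le_of_lt hC)
      calc ηk * C ≤ (1 / (α * K)) * C := h
        _ = C / (α * K) := by ring
    refine h2.trans ?_
    rw [div_le_div_iff₀ (by positivity) (by positivity)]
    nlinarith [mul_nonneg (mul_pos hα hC).le (sub_nonneg.mpr hK)]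

lemma gd_arith_gt (α β C c ηk K nu : ℝ) (hα : 0 < α) (hβ : 0 < β) (hC : 0 < C)
    (hc0 : 0 < c) (hK : 1 ≤ K)
    (hηmin : ηk = min (1 / (α * K)) (c / β)) (hηα1 : ηk * α ≤ 1)
    (hnu0 : 0 ≤ nu) (hub1 : nu ≤ C * c / β) (hub2 : nu ≤ 2 * C / (α * K)) :
    (1 - ηk * α) * nu ≤ min (C * c / β) (2 * C / (α * (K + 1))) := by
  have hη0 : 0 < ηk := by
    rw [hηmin]; exact lt_min (by positivity) (by positivity)
  have hfac0 : 0 ≤ 1 - ηk * α := by linarith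
  have hfac1 : 1 - ηk * α ≤ 1 := by nlinarith
  refine le_min ?_ ?_
  · calc (1 - ηk * α) * nu ≤ 1 * nu := mul_le_mul_of_nonneg_right hfac1 hnu0
      _ = nu := one_mul nu
      _ ≤ C * c / β := hub1
  · by_cases hmin : 1 / (α * K) ≤ c / β
    · have hηk : ηk = 1 / (α * K) := by rw [hηmin]; exact min_eq_left hmin
      have hηkα : ηk * α = 1 / K := by
        rw [hηk]; field_simp
      rw [hηkα]
      have hfac0' : 0 ≤ 1 - 1 / K := by rw [← hηkα]; exact hfac0
      have step1 : (1 - 1 / K) * nu ≤ (1 - 1 / K) * (2 * C / (α * K)) :=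
        mul_le_mul_of_nonneg_left hub2 hfac0'
      refine step1.trans ?_
      have hKk : (1 - 1 / K) = (K - 1) / K := by field_simp
      rw [hKk, div_mul_div_comm, div_le_div_iff₀ (by positivity) (by positivity)]
      nlinarith
    · push_neg at hmin
      have hcb : c / β ≤ 1 / (α * K) := le_of_lt hmin
      have h1 : (1 - ηk * α) * nu ≤ nu := by
        calc (1 - ηk * α) * nu ≤ 1 * nu := mul_le_mul_of_nonneg_right hfac1 hnu0
          _ = nu := one_mul nu
      have h2 : nu ≤ C / (α * K) := by
        refine hub1.trans ?_
        calc C * c / β = C * (c / β) := by ring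
          _ ≤ C * (1 / (α * K)) := mul_le_mul_of_nonneg_left hcb (le_of_lt hC)
          _ = C / (α * K) := by ring
      have h3 : C / (α * K) ≤ 2 * C / (α * (K + 1)) := by
        rw [div_le_div_iff₀ (by positivity) (by positivity)]
        nlinarith [mul_nonneg (mul_pos hα hC).le (sub_nonneg.mpr hK)]
      linarith

end helpers

set_option maxHeartbeats 1000000 in
/-- **Derivative bound for gradient descent iterates with respect to a single data
point.** If `F(·,s)` is `α`-strongly convex and `β`-smooth (via two-sided Hessian
bounds) and the mixed partial `∂_s ∇_x F` is bounded by `C`, then the map sending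
the `t`-th data point to the `N`-th projected-free gradient descent iterate is
differentiable with derivative of norm at most `min(C·min(1,2α)/β, 2C/(αN))`. -/
theorem gd_iterate_derivative_bound {d : ℕ} (hd : 1 ≤ d)
    (α β C : ℝ) (hα : 0 < α) (hβ : 0 < β) (hC : 0 < C) (hαβ : α ≤ β)
    (F : EuclideanSpace ℝ (Fin d) × ℝ → ℝ) (hF : ContDiff ℝ 2 F)
    (hHess : ∀ (x : EuclideanSpace ℝ (Fin d)) (s : ℝ) (v : EuclideanSpace ℝ (Fin d)),
      α * ‖v‖ ^ 2 ≤ ⟪(fderiv ℝ (fun y => gradient (fun z => F (z, s)) y) x) v, v⟫ ∧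
      ⟪(fderiv ℝ (fun y => gradient (fun z => F (z, s)) y) x) v, v⟫ ≤ β * ‖v‖ ^ 2)
    (hMixed : ∀ (x : EuclideanSpace ℝ (Fin d)) (s : ℝ),
      ‖deriv (fun r => gradient (fun z => F (z, r)) x) s‖ ≤ C)
    (N : ℕ) (hN : 1 ≤ N) (t : ℕ) (ht1 : 1 ≤ t) (htN : t ≤ N)
    (lam : ℕ → ℝ) (x₀ : EuclideanSpace ℝ (Fin d))
    (η : ℕ → ℝ)
    (hη : ∀ k : ℕ, η k = min (1 / (α * (k + 1))) (min 1 (2 * α) / β))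
    (μ : ℕ → ℝ → ℝ) (hμ : ∀ k s, k ≠ t → μ k s = lam k) (hμt : ∀ s, μ t s = s)
    (y : ℝ → ℕ → EuclideanSpace ℝ (Fin d))
    (hy0 : ∀ s, y s 0 = x₀)
    (hyk : ∀ (s : ℝ) (k : ℕ), 1 ≤ k → k ≤ N →
      y s k = y s (k - 1) - η (k - 1) • gradient (fun z => F (z, μ k s)) (y s (k - 1))) :
    Differentiable ℝ (fun s => y s N) ∧
      ∀ s : ℝ, ‖deriv (fun s' => y s' N) s‖
        ≤ min (C * min 1 (2 * α) / β) (2 * C / (α * N)) := by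
  classical
  set c : ℝ := min 1 (2 * α) with hc
  have hc0 : 0 < c := lt_min one_pos (by positivity)
  have hc1 : c ≤ 1 := min_le_left _ _
  have hηpos : ∀ k : ℕ, 0 < η k := by
    intro k; rw [hη k]
    exact lt_min (by positivity) (by positivity)
  have hη1 : ∀ k : ℕ, η k ≤ 1 / (α * ((k:ℝ) + 1)) := fun k => by
    rw [hη k]; exact min_le_left _ _
  have hη2 : ∀ k : ℕ, η k ≤ c / β := fun k => by rw [hη k]; exact min_le_right _ _
  have hηβ : ∀ k : ℕ, η k * β ≤ 1 := by
    intro k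
    have h := hη2 k
    have : η k * β ≤ (c / β) * β := by nlinarith
    have hcb : (c / β) * β = c := by field_simp
    linarith [this, hcb ▸ this, hc1]
  have hηα : ∀ k : ℕ, η k * α ≤ 1 / ((k:ℝ) + 1) := by
    intro k
    have hk1 : (0:ℝ) < (k:ℝ) + 1 := by positivity
    have h := hη1 k
    rw [le_div_iff₀ (by positivity)] at h
    rw [le_div_iff₀ hk1]
    nlinarith
  have hηα1 : ∀ k : ℕ, η k * α ≤ 1 := by
    intro k
    refine (hηα k).trans ?_
    rw [div_le_one (by positivity)]
    linarith [Nat.cast_nonneg (α := ℝ) k]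
  set B : ℕ → ℝ := fun k => if k < t then 0 else min (C * c / β) (2 * C / (α * ((k:ℝ) + 1)))
    with hB
  have key : ∀ k : ℕ, k ≤ N → ∀ s : ℝ,
      ∃ u, HasDerivAt (fun s' => y s' k) u s ∧ ‖u‖ ≤ B k := by
    intro k
    induction k with
    | zero =>
      intro _ s
      refine ⟨0, ?_, ?_⟩
      · have hfun : (fun s' => y s' 0) = fun _ => x₀ := funext fun s' => hy0 s'
        rw [hfun]; exact hasDerivAt_const s x₀
      · have hB0 : B 0 = 0 := by
          rw [hB]; simp only []; rw [if_pos (by omega : 0 < t)]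
        rw [hB0]; simp
    | succ k ih =>
      intro hk1 s
      obtain ⟨u, hu, hub⟩ := ih (by omega) s
      set δ : ℝ := if k + 1 = t then 1 else 0 with hδ
      have hm : HasDerivAt (fun s' => μ (k + 1) s') δ s := by
        by_cases h : k + 1 = t
        · have hfun : (fun s' => μ (k + 1) s') = fun s' => s' :=
            funext fun s' => by rw [h, hμt]
          rw [hfun, hδ, if_pos h]; exact hasDerivAt_id s
        · have hfun : (fun s' => μ (k + 1) s') = fun _ => lam (k + 1) :=
            funext fun s' => hμ _ _ h
          rw [hfun, hδ, if_neg h]; exact hasDerivAt_const _ _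
      set H := fderiv ℝ (fun y' => gradient (fun z => F (z, μ (k+1) s)) y') (y s k) with hH
      set gd := deriv (fun r => gradient (fun z => F (z, r)) (y s k)) (μ (k+1) s) with hgd
      have hstep : HasDerivAt
          (fun s' => gradient (fun z => F (z, μ (k+1) s')) (y s' k)) (H u + δ • gd) s :=
        gd_step_hasDerivAt F hF hu hm
      have hfun : (fun s' => y s' (k+1))
          = fun s' => y s' k - η k • gradient (fun z => F (z, μ (k+1) s')) (y s' k) := by
        funext s'
        have := hyk s' (k+1) (by omega) hk1
        simpa using this
      refine ⟨u - η k • (H u + δ • gd), ?_, ?_⟩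
      · rw [hfun]; exact hu.sub (hstep.const_smul (η k))
      · have hsymH : ∀ a b, ⟪H a, b⟫ = ⟪H b, a⟫ := fun a b => gd_hess_symm F hF _ _ a b
        have hgdC : ‖gd‖ ≤ C := hMixed _ _
        have hcontr := gd_contraction H hsymH α β (η k) (le_of_lt (hηpos k)) (hηβ k)
          (hηα1 k) (fun v => (hHess _ _ v).1) (fun v => (hHess _ _ v).2) u
        have hrw : u - η k • (H u + δ • gd) = (u - η k • H u) - (η k * δ) • gd := by
          rw [smul_add, mul_smul]; abel
        have hnorm : ‖u - η k • (H u + δ • gd)‖ ≤ (1 - η k * α) * ‖u‖ + η k * |δ| * C := by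
          rw [hrw]
          refine (norm_sub_le _ _).trans ?_
          have h1 : ‖(η k * δ) • gd‖ = |η k| * |δ| * ‖gd‖ := by
            rw [norm_smul, Real.norm_eq_abs, abs_mul]
          have h2 : |η k| = η k := abs_of_pos (hηpos k)
          have h3 : |η k| * |δ| * ‖gd‖ ≤ η k * |δ| * C := by
            rw [h2]
            exact mul_le_mul_of_nonneg_left hgdC (mul_nonneg (le_of_lt (hηpos k)) (abs_nonneg δ))
          linarith [hcontr, h1 ▸ h3]
        have hfac0 : (0:ℝ) ≤ 1 - η k * α := by linarith [hηα1 k]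
        have hKpos : (0:ℝ) < (k:ℝ) + 1 := by positivity
        have hK2pos : (0:ℝ) < (k:ℝ) + 2 := by positivity
        refine hnorm.trans ?_
        rcases lt_trichotomy (k + 1) t with hlt | heq | hgt
        · -- before t : everything zero
          have hδ0 : δ = 0 := by rw [hδ, if_neg (by omega)]
          have hBk : B k = 0 := by rw [hB]; simp only [if_pos (by omega : k < t)]
          have hu0 : ‖u‖ = 0 := le_antisymm (hBk ▸ hub) (norm_nonneg u)
          have hBk1 : B (k+1) = 0 := by rw [hB]; simp only [if_pos hlt]
          rw [hδ0, hu0, hBk1]; simp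
        · -- k + 1 = t
          have hδ1 : δ = 1 := by rw [hδ, if_pos heq]
          have hBk : B k = 0 := by rw [hB]; simp only [if_pos (by omega : k < t)]
          have hu0 : ‖u‖ = 0 := le_antisymm (hBk ▸ hub) (norm_nonneg u)
          have hBk1 : B (k+1) = min (C * c / β) (2 * C / (α * (((k:ℝ)+1) + 1))) := by
            rw [hB]; simp only [if_neg (by omega : ¬ k + 1 < t)]
            norm_num
          rw [hδ1, hu0, hBk1]
          simp only [abs_one, mul_one, mul_zero, zero_add]
          exact gd_arith_t α β C c (η k) ((k:ℝ)+1) hα hβ hC hc0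
            (by linarith [Nat.cast_nonneg (α := ℝ) k]) (hη1 k) (hη2 k)
            (le_of_lt (hηpos k))
        · -- k + 1 > t, i.e. t ≤ k
          have hδ0 : δ = 0 := by rw [hδ, if_neg (by omega)]
          have hBk : B k = min (C * c / β) (2 * C / (α * ((k:ℝ) + 1))) := by
            rw [hB]; simp only [if_neg (by omega : ¬ k < t)]
          have hBk1 : B (k+1) = min (C * c / β) (2 * C / (α * (((k:ℝ)+1) + 1))) := by
            rw [hB]; simp only [if_neg (by omega : ¬ k + 1 < t)]
            norm_num
          rw [hδ0, hBk1]
          simp only [abs_zero, mul_zero, zero_mul, add_zero]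
          have hub1 : ‖u‖ ≤ C * c / β := hub.trans (by rw [hBk]; exact min_le_left _ _)
          have hub2 : ‖u‖ ≤ 2 * C / (α * ((k:ℝ) + 1)) :=
            hub.trans (by rw [hBk]; exact min_le_right _ _)
          exact gd_arith_gt α β C c (η k) ((k:ℝ)+1) ‖u‖ hα hβ hC hc0
            (by linarith [Nat.cast_nonneg (α := ℝ) k]) (hη k) (hηα1 k)
            (norm_nonneg u) hub1 hub2
  constructor
  · intro s
    obtain ⟨u, hder, _⟩ := key N le_rfl s
    exact hder.differentiableAt
  · intro s
    obtain ⟨u, hder, hb⟩ := key N le_rfl s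
    rw [hder.deriv]
    refine hb.trans ?_
    have hBN : B N = min (C * c / β) (2 * C / (α * ((N:ℝ) + 1))) := by
      rw [hB]; simp only [if_neg (by omega : ¬ N < t)]
    rw [hBN]
    refine min_le_min le_rfl ?_
    rw [div_le_div_iff₀ (by positivity) ?_]
    · nlinarith [hC, hα, (by exact_mod_cast hN : (1:ℝ) ≤ (N:ℝ))]
    · have : (1:ℝ) ≤ (N:ℝ) := by exact_mod_cast hN
      positivity
end

section
/- (Sensitivity bound for gradient descent with respect to a single data point.) Let d ≥ 1, let α, β, C > 0 with α ≤ β, and let F : ℝᵈ × ℝ → ℝ be twice continuously differentiable such that for every (x, s): (i) the Hessian H(x,s) of F(·,s) at x satisfies α‖v‖₂² ≤ vᵀH(x,s)v ≤ β‖v‖₂² for all v ∈ ℝᵈ, and (ii) ‖∂_s ∇_x F(x,s)‖₂ ≤ C. Fix N ≥ 1, an index t with 1 ≤ t ≤ N, real numbers λ₁,…,λ_N, a point x₀ ∈ ℝᵈ, and step sizes η_k = min(1/(α(k+1)), min(1,2α)/β). For s ∈ ℝ define iterates y₀(s) = x₀ and y_k(s) = y_{k−1}(s) − η_{k−1}·∇_x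 F(y_{k−1}(s), μ_k(s)) for 1 ≤ k ≤ N, where μ_k(s) = λ_k for k ≠ t and μ_t(s) = s. Then for all s, s' ∈ ℝ with |s − s'| ≤ 1/T (T > 0), ‖y_N(s) − y_N(s')‖₂ ≤ (1/T)·min( C·min(1,2α)/β , 2C/(αN) ). -/
open scoped RealInnerProductSpace


open scoped RealInnerProductSpace

set_option linter.unusedSectionVars false

section Helpers

variable {E : Type*} [NormedAddCommGroup E] [InnerProductSpace ℝ E] [CompleteSpace E]

lemma symm_cauchy_schwarz (B : E →L[ℝ] E)
    (hsym : ∀ u v : E, ⟪B u, v⟫ = ⟪u, B v⟫)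
    (hpos : ∀ v : E, 0 ≤ ⟪B v, v⟫) (v w : E) :
    ⟪B v, w⟫ ^ 2 ≤ ⟪B v, v⟫ * ⟪B w, w⟫ := by
  have h : ∀ t : ℝ, 0 ≤ ⟪B w, w⟫ * (t * t) + (2 * ⟪B v, w⟫) * t + ⟪B v, v⟫ := by
    intro t
    have h0 := hpos (v + t • w)
    have e2 : ⟪B w, v⟫ = ⟪B v, w⟫ := by rw [hsym w v, real_inner_comm]
    have e1 : ⟪B (v + t • w), v + t • w⟫
        = ⟪B v, v⟫ + t * ⟪B v, w⟫ + t * ⟪B w, v⟫ + t * t * ⟪B w, w⟫ := by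
      simp only [map_add, map_smul, inner_add_left, inner_add_right,
        real_inner_smul_left, real_inner_smul_right]
      ring
    rw [e1, e2] at h0
    nlinarith [h0]
  have hd := discrim_le_zero h
  rw [discrim] at hd
  nlinarith [hd]

lemma apply_norm_le_of_symm (B : E →L[ℝ] E) (m : ℝ) (hm : 0 ≤ m)
    (hsym : ∀ u v : E, ⟪B u, v⟫ = ⟪u, B v⟫)
    (hpos : ∀ v : E, 0 ≤ ⟪B v, v⟫) (hub : ∀ v : E, ⟪B v, v⟫ ≤ m * ‖v‖ ^ 2)
    (v : E) : ‖B v‖ ≤ m * ‖v‖ := by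
  rcases eq_or_lt_of_le (norm_nonneg (B v)) with hz | hz
  · rw [← hz]; positivity
  have h1 : ⟪B v, B v⟫ = ‖B v‖ ^ 2 := real_inner_self_eq_norm_sq _
  have h2 := symm_cauchy_schwarz B hsym hpos v (B v)
  have h3 := hub v
  have h4 := hub (B v)
  have h5 := hpos v
  rw [h1] at h2
  have h6 : (‖B v‖ ^ 2) ^ 2 ≤ (m * ‖v‖ ^ 2) * (m * ‖B v‖ ^ 2) := by
    calc (‖B v‖ ^ 2) ^ 2 ≤ ⟪B v, v⟫ * ⟪B (B v), B v⟫ := h2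
      _ ≤ (m * ‖v‖ ^ 2) * (m * ‖B v‖ ^ 2) := by
          apply mul_le_mul h3 h4 (hpos (B v)) (by positivity)
  have h8 : ‖B v‖ ^ 2 ≤ (m * ‖v‖) ^ 2 :=
    le_of_mul_le_mul_right (by nlinarith [h6]) (by positivity)
  exact (pow_le_pow_iff_left₀ (norm_nonneg _) (mul_nonneg hm (norm_nonneg v)) two_ne_zero).mp h8

lemma gradient_eq_comp (f : E → ℝ) :
    (fun y => gradient f y) = ((InnerProductSpace.toDual ℝ E).symm) ∘ (fderiv ℝ f) := rfl

lemma differentiable_gradient (f : E → ℝ) (hf : ContDiff ℝ 2 f) :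
    Differentiable ℝ (fun y => gradient f y) := by
  rw [gradient_eq_comp]
  exact ((InnerProductSpace.toDual ℝ E).symm.differentiable).comp
    ((hf.fderiv_right (m := 1) (by norm_num)).differentiable one_ne_zero)

lemma fderiv_gradient_inner (f : E → ℝ) (x u v : E) :
    ⟪fderiv ℝ (fun y => gradient f y) x u, v⟫ = fderiv ℝ (fderiv ℝ f) x u v := by
  rw [gradient_eq_comp, LinearIsometryEquiv.comp_fderiv]
  exact InnerProductSpace.toDual_symm_apply

lemma fderiv_gradient_symm (f : E → ℝ) (hf : ContDiff ℝ 2 f) (x u v : E) :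
    ⟪fderiv ℝ (fun y => gradient f y) x u, v⟫ = ⟪fderiv ℝ (fun y => gradient f y) x v, u⟫ := by
  rw [fderiv_gradient_inner, fderiv_gradient_inner]
  exact hf.contDiffAt.isSymmSndFDerivAt (by norm_num) u v

lemma contraction_step (f : E → ℝ) (hf : ContDiff ℝ 2 f) (α β η : ℝ)
    (hα : 0 < α) (hαβ : α ≤ β) (hη0 : 0 ≤ η) (hηβ : η * β ≤ 1)
    (hH : ∀ (x v : E), α * ‖v‖ ^ 2 ≤ ⟪fderiv ℝ (fun y => gradient f y) x v, v⟫ ∧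
        ⟪fderiv ℝ (fun y => gradient f y) x v, v⟫ ≤ β * ‖v‖ ^ 2)
    (x x' : E) :
    ‖(x - η • gradient f x) - (x' - η • gradient f x')‖ ≤ (1 - η * α) * ‖x - x'‖ := by
  have hg := differentiable_gradient f hf
  set G : E → E := fun z => z - η • gradient f z with hGdef
  have hG : Differentiable ℝ G := differentiable_id.sub (hg.const_smul η)
  have hfd : ∀ z, fderiv ℝ G z
      = ContinuousLinearMap.id ℝ E - η • fderiv ℝ (fun y => gradient f y) z := by
    intro z
    rw [hGdef]
    rw [fderiv_fun_sub differentiableAt_fun_id ((hg z).fun_const_smul η), fderiv_id',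
      fderiv_fun_const_smul (hg z)]
  have hηα : η * α ≤ 1 := le_trans (mul_le_mul_of_nonneg_left hαβ hη0) hηβ
  have hm : 0 ≤ 1 - η * α := by linarith
  have hbound : ∀ z, ‖fderiv ℝ G z‖ ≤ 1 - η * α := by
    intro z
    apply ContinuousLinearMap.opNorm_le_bound _ hm
    intro v
    rw [hfd z]
    set A := fderiv ℝ (fun y => gradient f y) z with hA
    have hBapp : ∀ u : E, (ContinuousLinearMap.id ℝ E - η • A) u = u - η • A u := fun u => rfl
    have hsymA : ∀ u w : E, ⟪A u, w⟫ = ⟪u, A w⟫ := by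
      intro u w
      rw [fderiv_gradient_symm f hf z u w, real_inner_comm]
    have hsym : ∀ u w : E, ⟪(ContinuousLinearMap.id ℝ E - η • A) u, w⟫
        = ⟪u, (ContinuousLinearMap.id ℝ E - η • A) w⟫ := by
      intro u w
      rw [hBapp, hBapp, inner_sub_left, inner_sub_right, real_inner_smul_left,
        real_inner_smul_right, hsymA]
    have hpos : ∀ u : E, 0 ≤ ⟪(ContinuousLinearMap.id ℝ E - η • A) u, u⟫ := by
      intro u
      rw [hBapp, inner_sub_left, real_inner_smul_left, real_inner_self_eq_norm_sq]
      have h2 := (hH z u).2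
      nlinarith [sq_nonneg ‖u‖, (hH z u).1, mul_le_mul_of_nonneg_left h2 hη0]
    have hub : ∀ u : E, ⟪(ContinuousLinearMap.id ℝ E - η • A) u, u⟫ ≤ (1 - η * α) * ‖u‖ ^ 2 := by
      intro u
      rw [hBapp, inner_sub_left, real_inner_smul_left, real_inner_self_eq_norm_sq]
      nlinarith [mul_le_mul_of_nonneg_left (hH z u).1 hη0]
    exact apply_norm_le_of_symm _ (1 - η * α) hm hsym hpos hub v
  have key := Convex.norm_image_sub_le_of_norm_fderiv_le
    (fun z _ => hG z) (fun z (_ : z ∈ (Set.univ : Set E)) => hbound z)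
    convex_univ (Set.mem_univ x') (Set.mem_univ x)
  simpa using key

end Helpers

lemma gradient_param_lipschitz {E : Type*} [NormedAddCommGroup E] [InnerProductSpace ℝ E]
    [CompleteSpace E] (F : E × ℝ → ℝ) (hF : ContDiff ℝ 2 F) (C : ℝ)
    (hMixed : ∀ (x : E) (s : ℝ), ‖deriv (fun r => gradient (fun z => F (z, r)) x) s‖ ≤ C)
    (x : E) (s s' : ℝ) :
    ‖gradient (fun z => F (z, s)) x - gradient (fun z => F (z, s')) x‖ ≤ C * |s - s'| := by
  set g : ℝ → E := fun r => gradient (fun z => F (z, r)) x with hgdef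
  have hfd : ∀ r, fderiv ℝ (fun z => F (z, r)) x
      = (fderiv ℝ F (x, r)).comp (ContinuousLinearMap.inl ℝ E ℝ) := by
    intro r
    have h1 : HasFDerivAt (fun z : E => (z, r)) (ContinuousLinearMap.inl ℝ E ℝ) x :=
      hasFDerivAt_prodMk_left x r
    exact ((((hF.differentiable (by norm_num)) (x, r)).hasFDerivAt.comp x h1)).fderiv
  have hg : Differentiable ℝ g := by
    have h2 : Differentiable ℝ
        (fun r : ℝ => (fderiv ℝ F (x, r)).comp (ContinuousLinearMap.inl ℝ E ℝ)) := by
      apply Differentiable.clm_comp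
      · exact ((hF.fderiv_right (m := 1) (by norm_num)).differentiable one_ne_zero).comp
          ((differentiable_const x).prodMk differentiable_id)
      · exact differentiable_const _
    have h3 : g = fun r => (InnerProductSpace.toDual ℝ E).symm
        ((fderiv ℝ F (x, r)).comp (ContinuousLinearMap.inl ℝ E ℝ)) := by
      funext r
      rw [hgdef]
      show (InnerProductSpace.toDual ℝ E).symm (fderiv ℝ (fun z => F (z, r)) x) = _
      rw [hfd r]
    rw [h3]
    exact ((InnerProductSpace.toDual ℝ E).symm.differentiable).comp h2
  have key := Convex.norm_image_sub_le_of_norm_deriv_le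
    (fun r (_ : r ∈ (Set.univ : Set ℝ)) => hg r)
    (fun r _ => hMixed x r) convex_univ (Set.mem_univ s') (Set.mem_univ s)
  simpa [Real.norm_eq_abs] using key

lemma step_arith (α c : ℝ) (hα : 0 < α) (hc : 0 < c) (k : ℕ) (hk : 1 ≤ k) :
    (1 - min (1 / (α * (k + 1))) c * α) * min c (2 / (α * k))
      ≤ min c (2 / (α * ((k : ℝ) + 1))) := by
  have hk1 : (1 : ℝ) ≤ (k : ℝ) := by exact_mod_cast hk
  have hkpos : (0 : ℝ) < k := by linarith
  have hαk1 : (0 : ℝ) < α * ((k : ℝ) + 1) := by positivity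
  set ηk : ℝ := min (1 / (α * (k + 1))) c with hηk
  have hηk0 : 0 ≤ ηk := le_min (by positivity) hc.le
  have hηkle : ηk ≤ 1 / (α * (k + 1)) := min_le_left _ _
  have hfacle : ηk * α ≤ 1 / ((k : ℝ) + 1) := by
    have := mul_le_mul_of_nonneg_right hηkle hα.le
    calc ηk * α ≤ 1 / (α * ((k:ℝ) + 1)) * α := this
      _ = 1 / ((k : ℝ) + 1) := by field_simp
  have hfac0 : 0 ≤ 1 - ηk * α := by
    have : 1 / ((k : ℝ) + 1) ≤ 1 := by
      rw [div_le_one (by linarith)]; linarith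
    linarith
  have hfac1 : 1 - ηk * α ≤ 1 := by nlinarith
  have hminpos : 0 ≤ min c (2 / (α * (k : ℝ))) := le_min hc.le (by positivity)
  apply le_min
  · calc (1 - ηk * α) * min c (2 / (α * k)) ≤ 1 * c :=
        mul_le_mul hfac1 (min_le_left _ _) hminpos one_pos.le
      _ = c := one_mul c
  · rcases le_or_gt (1 / (α * ((k : ℝ) + 1))) c with h | h
    · have hη : ηk = 1 / (α * ((k : ℝ) + 1)) := min_eq_left h
      calc (1 - ηk * α) * min c (2 / (α * k))
          ≤ (1 - ηk * α) * (2 / (α * k)) :=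
            mul_le_mul_of_nonneg_left (min_le_right _ _) hfac0
        _ = 2 / (α * ((k : ℝ) + 1)) := by
            rw [hη]; field_simp; ring
    · have hη : ηk = c := min_eq_right h.le
      have h2 : c ≤ 2 / (α * ((k : ℝ) + 1)) := by
        calc c ≤ 1 / (α * ((k : ℝ) + 1)) := h.le
          _ ≤ 2 / (α * ((k : ℝ) + 1)) := by gcongr <;> norm_num
      calc (1 - ηk * α) * min c (2 / (α * k)) ≤ 1 * c :=
          mul_le_mul hfac1 (min_le_left _ _) hminpos one_pos.le
        _ = c := one_mul c
        _ ≤ 2 / (α * ((k : ℝ) + 1)) := h2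


/-- **Sensitivity bound for gradient descent with respect to a single data point.**
Under two-sided Hessian bounds `αI ⪯ H ⪯ βI` and a bound `C` on the mixed partial
`∂_s ∇_x F`, changing the `t`-th data point by at most `1/T` moves the `N`-th
gradient descent iterate by at most `(1/T)·min(C·min(1,2α)/β, 2C/(αN))`. -/
theorem gd_iterate_sensitivity_bound {d : ℕ} (hd : 1 ≤ d)
    (α β C : ℝ) (hα : 0 < α) (hβ : 0 < β) (hC : 0 < C) (hαβ : α ≤ β)
    (F : EuclideanSpace ℝ (Fin d) × ℝ → ℝ) (hF : ContDiff ℝ 2 F)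
    (hHess : ∀ (x : EuclideanSpace ℝ (Fin d)) (s : ℝ) (v : EuclideanSpace ℝ (Fin d)),
      α * ‖v‖ ^ 2 ≤ ⟪(fderiv ℝ (fun y => gradient (fun z => F (z, s)) y) x) v, v⟫ ∧
      ⟪(fderiv ℝ (fun y => gradient (fun z => F (z, s)) y) x) v, v⟫ ≤ β * ‖v‖ ^ 2)
    (hMixed : ∀ (x : EuclideanSpace ℝ (Fin d)) (s : ℝ),
      ‖deriv (fun r => gradient (fun z => F (z, r)) x) s‖ ≤ C)
    (N : ℕ) (hN : 1 ≤ N) (t : ℕ) (ht1 : 1 ≤ t) (htN : t ≤ N)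
    (lam : ℕ → ℝ) (x₀ : EuclideanSpace ℝ (Fin d))
    (η : ℕ → ℝ)
    (hη : ∀ k : ℕ, η k = min (1 / (α * (k + 1))) (min 1 (2 * α) / β))
    (μ : ℕ → ℝ → ℝ) (hμ : ∀ k s, k ≠ t → μ k s = lam k) (hμt : ∀ s, μ t s = s)
    (y : ℝ → ℕ → EuclideanSpace ℝ (Fin d))
    (hy0 : ∀ s, y s 0 = x₀)
    (hyk : ∀ (s : ℝ) (k : ℕ), 1 ≤ k → k ≤ N →
      y s k = y s (k - 1) - η (k - 1) • gradient (fun z => F (z, μ k s)) (y s (k - 1)))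
    (T : ℝ) (hT : 0 < T) :
    ∀ s s' : ℝ, |s - s'| ≤ 1 / T →
      ‖y s N - y s' N‖ ≤ (1 / T) * min (C * min 1 (2 * α) / β) (2 * C / (α * N)) := by
  intro s s' hss
  have hΔ0 : (0 : ℝ) ≤ |s - s'| := abs_nonneg _
  set Δ : ℝ := |s - s'| with hΔdef
  set c : ℝ := min 1 (2 * α) / β with hcdef
  have hc0 : 0 < c := div_pos (lt_min one_pos (by linarith)) hβ
  have hη0 : ∀ k, 0 ≤ η k := by
    intro k; rw [hη k]; exact le_min (by positivity) hc0.le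
  have hηβ1 : ∀ k, η k * β ≤ 1 := by
    intro k
    have h1 : η k ≤ 1 / β := by
      rw [hη k]
      refine (min_le_right _ _).trans ?_
      rw [hcdef]
      gcongr
      · exact min_le_left _ _
    calc η k * β ≤ (1 / β) * β := mul_le_mul_of_nonneg_right h1 hβ.le
      _ = 1 := by field_simp
  have hslice : ∀ r : ℝ, ContDiff ℝ 2 (fun z : EuclideanSpace ℝ (Fin d) => F (z, r)) :=
    fun r => hF.comp (contDiff_id.prodMk contDiff_const)
  -- iterates agree before step t
  have heq : ∀ k, k < t → y s k = y s' k := by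
    intro k hk
    induction k with
    | zero => rw [hy0, hy0]
    | succ n ih =>
      have hn : n < t := Nat.lt_of_succ_lt hk
      have h1 : 1 ≤ n + 1 := Nat.succ_le_succ (Nat.zero_le n)
      have h2 : n + 1 ≤ N := le_of_lt (lt_of_lt_of_le hk htN)
      rw [hyk s (n + 1) h1 h2, hyk s' (n + 1) h1 h2, hμ (n + 1) s (Nat.ne_of_lt hk),
        hμ (n + 1) s' (Nat.ne_of_lt hk)]
      simp only [Nat.add_sub_cancel]
      rw [ih hn]
  -- bound at step t
  have hbase : ‖y s t - y s' t‖ ≤ η (t - 1) * (C * Δ) := by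
    have hp : y s (t - 1) = y s' (t - 1) := heq (t - 1) (Nat.sub_lt ht1 one_pos)
    rw [hyk s t ht1 htN, hyk s' t ht1 htN, hμt s, hμt s', ← hp]
    have hre : (y s (t - 1) - η (t - 1) • gradient (fun z => F (z, s)) (y s (t - 1)))
        - (y s (t - 1) - η (t - 1) • gradient (fun z => F (z, s')) (y s (t - 1)))
        = η (t - 1) • (gradient (fun z => F (z, s')) (y s (t - 1))
            - gradient (fun z => F (z, s)) (y s (t - 1))) := by
      rw [smul_sub]; abel
    rw [hre, norm_smul, Real.norm_eq_abs, abs_of_nonneg (hη0 (t - 1))]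
    have hLip := gradient_param_lipschitz F hF C hMixed (y s (t - 1)) s' s
    have habs : |s' - s| = Δ := by rw [hΔdef, abs_sub_comm]
    rw [habs] at hLip
    exact mul_le_mul_of_nonneg_left hLip (hη0 (t - 1))
  -- main induction from t to N
  have hmain : ∀ k, t ≤ k → k ≤ N →
      ‖y s k - y s' k‖ ≤ C * Δ * min c (2 / (α * (k : ℝ))) := by
    intro k hk
    induction k, hk using Nat.le_induction with
    | base =>
      intro _
      have hcast : ((t - 1 : ℕ) : ℝ) + 1 = (t : ℝ) := by
        push_cast [Nat.cast_sub ht1]; ring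
      have ht0 : (0 : ℝ) < (t : ℝ) := by exact_mod_cast ht1
      have hηt : η (t - 1) ≤ min c (2 / (α * (t : ℝ))) := by
        rw [hη (t - 1), hcast]
        apply le_min (min_le_right _ _)
        refine (min_le_left _ _).trans ?_
        have hpos : (0:ℝ) < α * (t : ℝ) := by positivity
        gcongr
        norm_num
      calc ‖y s t - y s' t‖ ≤ η (t - 1) * (C * Δ) := hbase
        _ ≤ min c (2 / (α * (t : ℝ))) * (C * Δ) :=
            mul_le_mul_of_nonneg_right hηt (by positivity)
        _ = C * Δ * min c (2 / (α * (t : ℝ))) := by ring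
    | succ k hk ih =>
      intro hk1N
      have hkN : k ≤ N := Nat.le_of_succ_le hk1N
      have ihk := ih hkN
      have hk1 : 1 ≤ k := le_trans ht1 hk
      have hne : k + 1 ≠ t := by omega
      have hupd : ∀ r : ℝ, y r (k + 1)
          = y r k - η k • gradient (fun z => F (z, lam (k + 1))) (y r k) := by
        intro r
        rw [hyk r (k + 1) (Nat.succ_le_succ (Nat.zero_le k)) hk1N, hμ (k + 1) r hne]
        simp only [Nat.add_sub_cancel]
      have hcon := contraction_step (fun z => F (z, lam (k + 1))) (hslice (lam (k + 1)))
        α β (η k) hα hαβ (hη0 k) (hηβ1 k)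
        (fun x v => hHess x (lam (k + 1)) v) (y s k) (y s' k)
      have hfac0 : 0 ≤ 1 - η k * α := by
        have : η k * α ≤ η k * β := mul_le_mul_of_nonneg_left hαβ (hη0 k)
        linarith [hηβ1 k]
      have harith := step_arith α c hα hc0 k hk1
      rw [← hη k] at harith
      calc ‖y s (k + 1) - y s' (k + 1)‖
          ≤ (1 - η k * α) * ‖y s k - y s' k‖ := by rw [hupd s, hupd s']; exact hcon
        _ ≤ (1 - η k * α) * (C * Δ * min c (2 / (α * (k : ℝ)))) :=
            mul_le_mul_of_nonneg_left ihk hfac0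
        _ = C * Δ * ((1 - η k * α) * min c (2 / (α * (k : ℝ)))) := by ring
        _ ≤ C * Δ * min c (2 / (α * ((k : ℝ) + 1))) :=
            mul_le_mul_of_nonneg_left harith (by positivity)
        _ = C * Δ * min c (2 / (α * ((k + 1 : ℕ) : ℝ))) := by push_cast; ring_nf
  have hfinal := hmain N htN le_rfl
  have hNpos : (0 : ℝ) < (N : ℝ) := by exact_mod_cast hN
  have hgoal : C * Δ * min c (2 / (α * (N : ℝ)))
      ≤ (1 / T) * min (C * min 1 (2 * α) / β) (2 * C / (α * N)) := by
    have hΔT : Δ ≤ 1 / T := hss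
    rcases le_total (C * min 1 (2 * α) / β) (2 * C / (α * N)) with h | h
    · rw [min_eq_left h]
      calc C * Δ * min c (2 / (α * (N : ℝ))) ≤ C * Δ * c :=
            mul_le_mul_of_nonneg_left (min_le_left _ _) (by positivity)
        _ = Δ * (C * min 1 (2 * α) / β) := by rw [hcdef]; ring
        _ ≤ (1 / T) * (C * min 1 (2 * α) / β) := by
            apply mul_le_mul_of_nonneg_right hΔT
            positivity
    · rw [min_eq_right h]
      calc C * Δ * min c (2 / (α * (N : ℝ))) ≤ C * Δ * (2 / (α * (N : ℝ))) :=
            mul_le_mul_of_nonneg_left (min_le_right _ _) (by positivity)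
        _ = Δ * (2 * C / (α * N)) := by ring
        _ ≤ (1 / T) * (2 * C / (α * N)) := by
            apply mul_le_mul_of_nonneg_right hΔT
            positivity
  exact hfinal.trans hgoal
end

section
/- (One-step contraction of projected stochastic gradient descent in expectation.) Let X ⊆ ℝᵈ be nonempty, closed and convex with metric projection Π_X, let x ∈ ℝᵈ, x* ∈ X, η > 0, and K, α, β ≥ 0. Let (Ω, P) be a probability space and G : Ω → ℝᵈ a square-integrable random vector. Suppose: (i) E[G] = a for some a ∈ ℝᵈ; (ii) E[‖G − a‖₂²] ≤ K²; (iii) there is b* ∈ ℝᵈ with Π_X(x* − η·b*) = x*; (iv) ‖a − b*‖₂ ≤ β·‖x − x*‖₂; (v) ⟨a − b*, x − x*⟩ ≥ α·‖x − x*‖₂². Then E[ ‖Π_X(x − η·G) − x*‖₂² ] ≤ (1 − 2αη + β²η²)·‖x − x*‖₂² + η²·K². -/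
open MeasureTheory
open scoped RealInnerProductSpace

section Aux

variable {d : ℕ}

/-- Variational inequality for a minimizing projection. -/
lemma proj_var_ineq {X : Set (EuclideanSpace ℝ (Fin d))} (hXco : Convex ℝ X)
    {proj : EuclideanSpace ℝ (Fin d) → EuclideanSpace ℝ (Fin d)}
    (hproj : ∀ y, proj y ∈ X ∧ ∀ z ∈ X, dist y (proj y) ≤ dist y z)
    (y : EuclideanSpace ℝ (Fin d)) {z : EuclideanSpace ℝ (Fin d)} (hz : z ∈ X) :
    ⟪y - proj y, z - proj y⟫ ≤ 0 := by
  obtain ⟨hmem, hmin⟩ := hproj y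
  haveI : Nonempty X := ⟨⟨proj y, hmem⟩⟩
  have hinf : ‖y - proj y‖ = ⨅ w : X, ‖y - w‖ := by
    apply le_antisymm
    · exact le_ciInf fun w => by
        simpa [dist_eq_norm] using hmin w w.2
    · exact ciInf_le ⟨0, fun r ⟨w, hw⟩ => hw ▸ norm_nonneg _⟩ (⟨proj y, hmem⟩ : X)
  exact ((norm_eq_iInf_iff_real_inner_le_zero hXco hmem).mp hinf) z hz

/-- Nonexpansiveness of a minimizing projection onto a convex set. -/
lemma proj_nonexpansive {X : Set (EuclideanSpace ℝ (Fin d))} (hXco : Convex ℝ X)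
    {proj : EuclideanSpace ℝ (Fin d) → EuclideanSpace ℝ (Fin d)}
    (hproj : ∀ y, proj y ∈ X ∧ ∀ z ∈ X, dist y (proj y) ≤ dist y z)
    (y₁ y₂ : EuclideanSpace ℝ (Fin d)) :
    ‖proj y₁ - proj y₂‖ ≤ ‖y₁ - y₂‖ := by
  have h1 := proj_var_ineq hXco hproj y₁ (hproj y₂).1
  have h2 := proj_var_ineq hXco hproj y₂ (hproj y₁).1
  set p₁ := proj y₁
  set p₂ := proj y₂
  have key : ‖p₁ - p₂‖ ^ 2 ≤ ⟪y₁ - y₂, p₁ - p₂⟫ := by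
    have e1 : ⟪y₁ - p₁, p₂ - p₁⟫ ≤ 0 := h1
    have e2 : ⟪y₂ - p₂, p₁ - p₂⟫ ≤ 0 := h2
    have expand : ⟪y₁ - y₂, p₁ - p₂⟫ - ‖p₁ - p₂‖ ^ 2
        = (-(⟪y₁ - p₁, p₂ - p₁⟫)) + (-(⟪y₂ - p₂, p₁ - p₂⟫)) := by
      rw [← @real_inner_self_eq_norm_sq]
      simp only [inner_sub_left, inner_sub_right, inner_neg_left, inner_neg_right]
      rw [real_inner_comm p₂ p₁]
      ring
    nlinarith [expand, e1, e2]
  have cs : ⟪y₁ - y₂, p₁ - p₂⟫ ≤ ‖y₁ - y₂‖ * ‖p₁ - p₂‖ := real_inner_le_norm _ _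
  nlinarith [norm_nonneg (p₁ - p₂), norm_nonneg (y₁ - y₂)]

end Aux

/-- **One-step contraction of projected stochastic gradient descent in
expectation.** If `G` is a square-integrable stochastic gradient with mean `a` and
variance at most `K²`, `x*` is a fixed point of the projected step with the mean
gradient `b*` at `x*`, and `a - b*` is `β`-Lipschitz-bounded and `α`-strongly
monotone relative to `x - x*`, then the expected squared distance after one
projected step contracts. -/
theorem projected_sgd_one_step_contraction {d : ℕ}
    (X : Set (EuclideanSpace ℝ (Fin d))) (hXne : X.Nonempty)
    (hXcl : IsClosed X) (hXco : Convex ℝ X)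
    (proj : EuclideanSpace ℝ (Fin d) → EuclideanSpace ℝ (Fin d))
    (hproj : ∀ y, proj y ∈ X ∧ ∀ z ∈ X, dist y (proj y) ≤ dist y z)
    (x xstar : EuclideanSpace ℝ (Fin d)) (hxstar : xstar ∈ X)
    (η : ℝ) (hη : 0 < η) (K α β : ℝ) (hK : 0 ≤ K) (hα : 0 ≤ α) (hβ : 0 ≤ β)
    {Ω : Type*} [MeasurableSpace Ω] (P : Measure Ω) [IsProbabilityMeasure P]
    (G : Ω → EuclideanSpace ℝ (Fin d)) (hG : MemLp G 2 P)
    (a : EuclideanSpace ℝ (Fin d)) (ha : ∫ ω, G ω ∂P = a)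
    (hvar : ∫ ω, ‖G ω - a‖ ^ 2 ∂P ≤ K ^ 2)
    (bstar : EuclideanSpace ℝ (Fin d))
    (hfix : proj (xstar - η • bstar) = xstar)
    (hlip : ‖a - bstar‖ ≤ β * ‖x - xstar‖)
    (hmono : ⟪a - bstar, x - xstar⟫ ≥ α * ‖x - xstar‖ ^ 2) :
    ∫ ω, ‖proj (x - η • G ω) - xstar‖ ^ 2 ∂P
      ≤ (1 - 2 * α * η + β ^ 2 * η ^ 2) * ‖x - xstar‖ ^ 2 + η ^ 2 * K ^ 2 := by
  set v := x - xstar with hv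
  set w := a - bstar with hw
  set u := v - η • w with hu
  set H := fun ω => G ω - a with hH
  -- integrability facts
  have hHmem : MemLp H 2 P := hG.sub (memLp_const a)
  have hHint : Integrable H P :=
    memLp_one_iff_integrable.mp (hHmem.mono_exponent (by norm_num))
  have hHsq : Integrable (fun ω => ‖H ω‖ ^ 2) P := by
    have := (memLp_two_iff_integrable_sq_norm hHmem.aestronglyMeasurable).mp hHmem
    exact this
  have hHinner : Integrable (fun ω => ⟪u, H ω⟫) P := hHint.const_inner u
  have hHmean : ∫ ω, H ω ∂P = 0 := by
    simp only [hH]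
    rw [integral_sub (memLp_one_iff_integrable.mp
      (hG.mono_exponent (by norm_num))) (integrable_const a)]
    simp [ha]
  -- pointwise bound
  have hpt : ∀ ω, ‖proj (x - η • G ω) - xstar‖ ^ 2
      ≤ ‖u‖ ^ 2 - 2 * η * ⟪u, H ω⟫ + η ^ 2 * ‖H ω‖ ^ 2 := by
    intro ω
    have h1 : ‖proj (x - η • G ω) - xstar‖ ≤ ‖u - η • H ω‖ := by
      have := proj_nonexpansive hXco hproj (x - η • G ω) (xstar - η • bstar)
      rw [hfix] at this
      refine this.trans_eq ?_
      congr 1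
      simp only [hu, hv, hw, hH]
      module
    have h2 : ‖u - η • H ω‖ ^ 2 = ‖u‖ ^ 2 - 2 * η * ⟪u, H ω⟫ + η ^ 2 * ‖H ω‖ ^ 2 := by
      rw [@norm_sub_sq_real, norm_smul, real_inner_smul_right]
      simp [mul_pow, abs_of_pos hη]
      ring
    calc ‖proj (x - η • G ω) - xstar‖ ^ 2 ≤ ‖u - η • H ω‖ ^ 2 := by
          exact pow_le_pow_left₀ (norm_nonneg _) h1 2
      _ = _ := h2
  -- integrate
  have hrhs_int : Integrable
      (fun ω => ‖u‖ ^ 2 - 2 * η * ⟪u, H ω⟫ + η ^ 2 * ‖H ω‖ ^ 2) P := by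
    exact ((integrable_const _).sub (hHinner.const_mul _)).add (hHsq.const_mul _)
  have hlhs_int : Integrable (fun ω => ‖proj (x - η • G ω) - xstar‖ ^ 2) P := by
    refine hrhs_int.mono' ?_ ?_
    · apply AEStronglyMeasurable.pow ?_
      apply AEStronglyMeasurable.norm
      apply AEStronglyMeasurable.sub ?_ aestronglyMeasurable_const
      have hcont : Continuous proj := by
        have : LipschitzWith 1 proj := by
          intro y₁ y₂
          rw [edist_dist, edist_dist, dist_eq_norm, dist_eq_norm]
          simpa using ENNReal.ofReal_le_ofReal (proj_nonexpansive hXco hproj y₁ y₂)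
        exact this.continuous
      exact (hcont.comp_aestronglyMeasurable
        (aestronglyMeasurable_const.sub (hG.aestronglyMeasurable.const_smul η)))
    · filter_upwards with ω
      rw [Real.norm_of_nonneg (by positivity)]
      exact hpt ω
  have step1 : ∫ ω, ‖proj (x - η • G ω) - xstar‖ ^ 2 ∂P
      ≤ ∫ ω, (‖u‖ ^ 2 - 2 * η * ⟪u, H ω⟫ + η ^ 2 * ‖H ω‖ ^ 2) ∂P :=
    integral_mono hlhs_int hrhs_int hpt
  have step2 : ∫ ω, (‖u‖ ^ 2 - 2 * η * ⟪u, H ω⟫ + η ^ 2 * ‖H ω‖ ^ 2) ∂P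
      = ‖u‖ ^ 2 + η ^ 2 * ∫ ω, ‖H ω‖ ^ 2 ∂P := by
    have e1 := integral_add (μ := P)
      (f := fun ω => ‖u‖ ^ 2 - 2 * η * ⟪u, H ω⟫) (g := fun ω => η ^ 2 * ‖H ω‖ ^ 2)
      ((integrable_const _).sub (hHinner.const_mul _)) (hHsq.const_mul _)
    have e2 := integral_sub (μ := P) (f := fun _ => ‖u‖ ^ 2)
      (g := fun ω => 2 * η * ⟪u, H ω⟫) (integrable_const _) (hHinner.const_mul _)
    rw [e1, e2]
    simp only [integral_const_mul, integral_inner hHint, hHmean, integral_const]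
    simp
  -- bound ‖u‖²
  have hu_bound : ‖u‖ ^ 2 ≤ (1 - 2 * α * η + β ^ 2 * η ^ 2) * ‖v‖ ^ 2 := by
    have hexp : ‖u‖ ^ 2 = ‖v‖ ^ 2 - 2 * η * ⟪w, v⟫ + η ^ 2 * ‖w‖ ^ 2 := by
      rw [hu, @norm_sub_sq_real, norm_smul, real_inner_smul_right,
        real_inner_comm v w]
      simp [mul_pow, abs_of_pos hη]
      ring
    have hw2 : ‖w‖ ^ 2 ≤ β ^ 2 * ‖v‖ ^ 2 := by
      nlinarith [norm_nonneg w, norm_nonneg v]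
    have hm : ⟪w, v⟫ ≥ α * ‖v‖ ^ 2 := hmono
    nlinarith [sq_nonneg η, hη.le]
  calc ∫ ω, ‖proj (x - η • G ω) - xstar‖ ^ 2 ∂P
      ≤ ‖u‖ ^ 2 + η ^ 2 * ∫ ω, ‖H ω‖ ^ 2 ∂P := by rw [← step2]; exact step1
    _ ≤ (1 - 2 * α * η + β ^ 2 * η ^ 2) * ‖v‖ ^ 2 + η ^ 2 * K ^ 2 := by
        have : η ^ 2 * ∫ ω, ‖H ω‖ ^ 2 ∂P ≤ η ^ 2 * K ^ 2 :=
          mul_le_mul_of_nonneg_left hvar (sq_nonneg η)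
        linarith [hu_bound]
end

section
/- Let 0 < α ≤ β and define the step sizes η_k = min(1/(α(k+1)), min(1,2α)/β) for k ∈ ℕ. Then for every natural number N ≥ 1, ∑_{t=0}^{N−1} η_t² · exp( −2α·∑_{k=t+1}^{N−1} η_k ) ≤ 4/(α²N). -/
lemma logsum (a b : ℕ) (hab : a ≤ b) :
    Real.log ((b:ℝ)+1) - Real.log ((a:ℝ)+1) ≤ ∑ k ∈ Finset.Ico a b, (1:ℝ)/((k:ℝ)+1) := by
  induction b with
  | zero => interval_cases a <;> simp
  | succ b ih =>
    rcases Nat.lt_or_ge a (b+1) with h | h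
    · have hab' : a ≤ b := Nat.lt_succ_iff.mp h
      rw [Finset.sum_Ico_succ_top hab']
      have hb : (0:ℝ) < (b:ℝ)+1 := by positivity
      have h1 : Real.log ((b:ℝ)+1+1) - Real.log ((b:ℝ)+1) ≤ 1/((b:ℝ)+1) := by
        have h2 := Real.log_le_sub_one_of_pos (x := ((b:ℝ)+1+1)/((b:ℝ)+1)) (by positivity)
        rw [Real.log_div (by positivity) (by positivity)] at h2
        have h3 : ((b:ℝ)+1+1)/((b:ℝ)+1) - 1 = 1/((b:ℝ)+1) := by field_simp; ring
        linarith
      have h3 := ih hab'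
      push_cast
      push_cast at h3
      linarith
    · have : a = b+1 := le_antisymm hab h
      subst this; simp

lemma geomsum (x : ℝ) (hx : 0 < x) (n : ℕ) :
    ∑ j ∈ Finset.range n, Real.exp (-x) ^ j ≤ (1+x)/x := by
  set r := Real.exp (-x) with hr
  have hr0 : (0:ℝ) < r := Real.exp_pos _
  have hr1 : r < 1 := by
    rw [hr]; exact Real.exp_lt_one_iff.mpr (by linarith)
  have hrn : (0:ℝ) ≤ r ^ n := by positivity
  have h1 : (∑ j ∈ Finset.range n, r ^ j) * (1 - r) ≤ 1 := by
    have := geom_sum_mul r n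
    nlinarith
  have hrle : r ≤ (1+x)⁻¹ := by
    rw [hr, Real.exp_neg]
    exact inv_anti₀ (by linarith) (by linarith [Real.add_one_le_exp x])
  have h2 : x ≤ (1-r)*(1+x) := by
    have : r * (1+x) ≤ 1 := by
      calc r * (1+x) ≤ (1+x)⁻¹ * (1+x) := by
            apply mul_le_mul_of_nonneg_right hrle (by linarith)
        _ = 1 := by field_simp
    nlinarith
  calc ∑ j ∈ Finset.range n, r ^ j
      = (∑ j ∈ Finset.range n, r ^ j) * (1 - r) / (1 - r) := by
        rw [mul_div_assoc, div_self (by linarith), mul_one]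
    _ ≤ 1 / (1-r) := by apply div_le_div_of_nonneg_right h1 (by linarith) |>.trans_eq rfl
    _ ≤ (1+x)/x := by rw [div_le_div_iff₀ (by linarith) hx]; nlinarith

set_option maxHeartbeats 1600000 in
/-- With step sizes `η_k = min(1/(α(k+1)), min(1,2α)/β)` for `0 < α ≤ β`, for every
`N ≥ 1`, `∑_{t=0}^{N-1} η_t² · exp(-2α ∑_{k=t+1}^{N-1} η_k) ≤ 4/(α²N)`. -/
theorem stepsize_squared_sum_bound (α β : ℝ) (hα : 0 < α) (hαβ : α ≤ β)
    (η : ℕ → ℝ)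
    (hη : ∀ k : ℕ, η k = min (1 / (α * (k + 1))) (min 1 (2 * α) / β))
    (N : ℕ) (hN : 1 ≤ N) :
    ∑ t ∈ Finset.range N,
        η t ^ 2 * Real.exp (-2 * α * ∑ k ∈ Finset.Ico (t + 1) N, η k)
      ≤ 4 / (α ^ 2 * N) := by
  have hβ : 0 < β := lt_of_lt_of_le hα hαβ
  obtain ⟨c, hcdef⟩ : ∃ c : ℝ, c = min 1 (2*α) / β := ⟨_, rfl⟩
  have hm : 0 < min 1 (2*α) := lt_min one_pos (by linarith)
  have hc : 0 < c := hcdef ▸ div_pos hm hβ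
  have hαc : 0 < α * c := mul_pos hα hc
  have hαc1 : α * c ≤ 1 := by
    rw [hcdef, ← mul_div_assoc, div_le_one hβ]
    rcases le_total 1 (2*α) with h | h
    · rw [min_eq_left h]; linarith
    · rw [min_eq_right h]; nlinarith
  obtain ⟨τ, hτdef⟩ : ∃ τ : ℕ, τ = ⌊1/(α*c)⌋₊ := ⟨_, rfl⟩
  have hτ1 : 1 ≤ τ := hτdef ▸ Nat.le_floor (by rw [Nat.cast_one, le_div_iff₀ hαc]; linarith)
  have hτle : (τ:ℝ) ≤ 1/(α*c) := hτdef ▸ Nat.floor_le (by positivity)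
  have hτgt : 1/(α*c) < (τ:ℝ) + 1 := hτdef ▸ Nat.lt_floor_add_one _
  have hτpos : (0:ℝ) < (τ:ℝ) := by exact_mod_cast hτ1
  have hcτ : α * c * (τ:ℝ) ≤ 1 := by
    rw [le_div_iff₀ hαc] at hτle; nlinarith
  have hηk : ∀ k : ℕ, η k = min (1/(α*((k:ℝ)+1))) c := by
    intro k; rw [hη k, hcdef]
  have hηpos : ∀ k : ℕ, 0 < η k := by
    intro k; rw [hηk k]
    exact lt_min (by positivity) hc
  have hη_le : ∀ k : ℕ, η k ≤ 1/(α*((k:ℝ)+1)) := fun k => (hηk k) ▸ min_le_left _ _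
  have hηlow : ∀ k : ℕ, k < τ → η k = c := by
    intro k hk
    rw [hηk k, min_eq_right]
    rw [le_div_iff₀ (by positivity)]
    have : ((k:ℝ)+1) ≤ (τ:ℝ) := by exact_mod_cast Nat.succ_le_of_lt hk
    nlinarith
  have hηhigh : ∀ k : ℕ, τ ≤ k → η k = 1/(α*((k:ℝ)+1)) := by
    intro k hk
    rw [hηk k, min_eq_left]
    rw [div_le_iff₀ (by positivity)]
    have h1 : 1 < ((τ:ℝ)+1) * (α*c) := (div_lt_iff₀ hαc).mp hτgt
    have h2 : ((τ:ℝ)+1) ≤ ((k:ℝ)+1) := by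
      have : (τ:ℝ) ≤ (k:ℝ) := by exact_mod_cast hk
      linarith
    nlinarith
  -- exponential decay bound for tails starting at or after τ
  have hexp : ∀ a : ℕ, τ ≤ a → a ≤ N →
      Real.exp (-2*α * ∑ k ∈ Finset.Ico a N, η k) ≤ ((a:ℝ)+1)^2/((N:ℝ)+1)^2 := by
    intro a ha haN
    have h1 : α * ∑ k ∈ Finset.Ico a N, η k = ∑ k ∈ Finset.Ico a N, (1:ℝ)/((k:ℝ)+1) := by
      rw [Finset.mul_sum]
      apply Finset.sum_congr rfl
      intro k hk
      rw [hηhigh k (le_trans ha (Finset.mem_Ico.mp hk).1)]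
      have : (0:ℝ) < (k:ℝ)+1 := by positivity
      field_simp
    have hsum : Real.log ((N:ℝ)+1) - Real.log ((a:ℝ)+1) ≤ α * ∑ k ∈ Finset.Ico a N, η k := by
      rw [h1]; exact logsum a N haN
    have h2 : -2*α * ∑ k ∈ Finset.Ico a N, η k
        ≤ Real.log (((a:ℝ)+1)^2) - Real.log (((N:ℝ)+1)^2) := by
      rw [Real.log_pow, Real.log_pow]
      push_cast
      nlinarith [hsum]
    calc Real.exp (-2*α * ∑ k ∈ Finset.Ico a N, η k)
        ≤ Real.exp (Real.log (((a:ℝ)+1)^2) - Real.log (((N:ℝ)+1)^2)) := Real.exp_le_exp.mpr h2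
      _ = ((a:ℝ)+1)^2/((N:ℝ)+1)^2 := by
          rw [Real.exp_sub, Real.exp_log (by positivity), Real.exp_log (by positivity)]
  rcases le_total N τ with hNτ | hτN
  -- Case A : N ≤ τ, all steps constant
  · have hcN : α * c * (N:ℝ) ≤ 1 := by
      rw [le_div_iff₀ hαc] at hτle
      have : ((N:ℝ)) ≤ (τ:ℝ) := by exact_mod_cast hNτ
      nlinarith
    have hterm : ∀ t ∈ Finset.range N,
        η t ^ 2 * Real.exp (-2 * α * ∑ k ∈ Finset.Ico (t + 1) N, η k)
          = c^2 * Real.exp (-(2*α*c)) ^ (N-1-t) := by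
      intro t ht
      have htN := Finset.mem_range.mp ht
      have h1 : ∑ k ∈ Finset.Ico (t+1) N, η k = (↑(N-(t+1)) : ℝ) * c := by
        rw [Finset.sum_congr rfl (fun k hk => hηlow k (lt_of_lt_of_le (Finset.mem_Ico.mp hk).2 hNτ))]
        rw [Finset.sum_const, Nat.card_Ico, nsmul_eq_mul]
      rw [hηlow t (lt_of_lt_of_le htN hNτ), h1]
      have h2 : -2*α*((↑(N-(t+1)):ℝ)*c) = (↑(N-(t+1)):ℝ) * (-(2*α*c)) := by ring
      rw [h2, Real.exp_nat_mul]
      have h3 : N - (t+1) = N - 1 - t := by omega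
      rw [h3]
    rw [Finset.sum_congr rfl hterm]
    have h4 : ∑ t ∈ Finset.range N, c^2 * Real.exp (-(2*α*c)) ^ (N-1-t)
        = c^2 * ∑ t ∈ Finset.range N, Real.exp (-(2*α*c)) ^ t := by
      rw [← Finset.mul_sum, Finset.sum_range_reflect (fun j => Real.exp (-(2*α*c)) ^ j) N]
    rw [h4]
    have h5 := geomsum (2*α*c) (by positivity) N
    have hNpos : (0:ℝ) < (N:ℝ) := by exact_mod_cast hN
    calc c^2 * ∑ t ∈ Finset.range N, Real.exp (-(2*α*c)) ^ t
        ≤ c^2 * ((1+2*α*c)/(2*α*c)) := by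
          apply mul_le_mul_of_nonneg_left h5 (by positivity)
      _ ≤ 4 / (α^2*(N:ℝ)) := by
          rw [le_div_iff₀ (by positivity)]
          have e1 : c^2*((1+2*α*c)/(2*α*c))*(α^2*(N:ℝ))
              = (α*c*(N:ℝ)) * (1+2*α*c) / 2 := by
            field_simp
          rw [e1]
          nlinarith [mul_pos hαc hNpos]
  -- Case B : τ ≤ N
  · have hNpos : (0:ℝ) < (N:ℝ) := by exact_mod_cast hN
    have hQ := hexp τ le_rfl hτN
    have hterm1 : ∀ t ∈ Finset.Ico τ N,
        η t ^ 2 * Real.exp (-2 * α * ∑ k ∈ Finset.Ico (t + 1) N, η k)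
          ≤ 4/(α^2*((N:ℝ)+1)^2) := by
      intro t ht
      obtain ⟨ht1, ht2⟩ := Finset.mem_Ico.mp ht
      have he := hexp (t+1) (Nat.le_succ_of_le ht1) ht2
      push_cast at he
      have hb : η t^2 ≤ (1/(α*((t:ℝ)+1)))^2 := pow_le_pow_left₀ (hηpos t).le (hη_le t) 2
      have hmul : η t ^ 2 * Real.exp (-2 * α * ∑ k ∈ Finset.Ico (t + 1) N, η k)
          ≤ (1/(α*((t:ℝ)+1)))^2 * (((t:ℝ)+1+1)^2/((N:ℝ)+1)^2) :=
        mul_le_mul hb he (Real.exp_pos _).le (by positivity)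
      refine hmul.trans ?_
      have ht0 : (0:ℝ) ≤ (t:ℝ) := Nat.cast_nonneg t
      have e1 : (1/(α*((t:ℝ)+1)))^2 * (((t:ℝ)+1+1)^2/((N:ℝ)+1)^2)
          = (((t:ℝ)+1+1)/((t:ℝ)+1))^2 / (α^2*((N:ℝ)+1)^2) := by
        field_simp
      rw [e1]
      have hr2 : ((t:ℝ)+1+1)/((t:ℝ)+1) ≤ 2 := by
        rw [div_le_iff₀ (by positivity)]; linarith
      have hr0 : (0:ℝ) ≤ ((t:ℝ)+1+1)/((t:ℝ)+1) := by positivity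
      have hsq : (((t:ℝ)+1+1)/((t:ℝ)+1))^2 ≤ 4 := by nlinarith
      exact div_le_div_of_nonneg_right hsq (by positivity)
    have hpart1 : ∑ t ∈ Finset.Ico τ N,
        η t ^ 2 * Real.exp (-2 * α * ∑ k ∈ Finset.Ico (t + 1) N, η k)
          ≤ ((N:ℝ)-(τ:ℝ)) * (4/(α^2*((N:ℝ)+1)^2)) := by
      have h := Finset.sum_le_card_nsmul (Finset.Ico τ N) _ (4/(α^2*((N:ℝ)+1)^2)) hterm1
      rw [Nat.card_Ico, nsmul_eq_mul, Nat.cast_sub hτN] at h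
      exact h
    have hterm2 : ∀ t ∈ Finset.range τ,
        η t ^ 2 * Real.exp (-2 * α * ∑ k ∈ Finset.Ico (t + 1) N, η k)
          ≤ c^2 * (((τ:ℝ)+1)^2/((N:ℝ)+1)^2) * Real.exp (-(2*α*c)) ^ (τ-1-t) := by
      intro t ht
      have htτ : t < τ := Finset.mem_range.mp ht
      have h1 : ∑ k ∈ Finset.Ico (t+1) N, η k
          = (↑(τ-(t+1)):ℝ) * c + ∑ k ∈ Finset.Ico τ N, η k := by
        rw [← Finset.sum_Ico_consecutive η (Nat.succ_le_of_lt htτ) hτN]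
        congr 1
        rw [Finset.sum_congr rfl (fun k hk => hηlow k (Finset.mem_Ico.mp hk).2),
            Finset.sum_const, Nat.card_Ico, nsmul_eq_mul]
      rw [hηlow t htτ, h1]
      have h2 : -2*α*((↑(τ-(t+1)):ℝ)*c + ∑ k ∈ Finset.Ico τ N, η k)
          = (↑(τ-(t+1)):ℝ)*(-(2*α*c)) + (-2*α*∑ k ∈ Finset.Ico τ N, η k) := by ring
      rw [h2, Real.exp_add, Real.exp_nat_mul]
      have h3 : τ - (t+1) = τ-1-t := by omega
      rw [h3]
      calc c^2 * (Real.exp (-(2*α*c))^(τ-1-t) * Real.exp (-2*α*∑ k ∈ Finset.Ico τ N, η k))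
          ≤ c^2 * (Real.exp (-(2*α*c))^(τ-1-t) * (((τ:ℝ)+1)^2/((N:ℝ)+1)^2)) := by
            apply mul_le_mul_of_nonneg_left
              (mul_le_mul_of_nonneg_left hQ (by positivity)) (by positivity)
        _ = c^2 * (((τ:ℝ)+1)^2/((N:ℝ)+1)^2) * Real.exp (-(2*α*c))^(τ-1-t) := by ring
    have hpart2 : ∑ t ∈ Finset.range τ,
        η t ^ 2 * Real.exp (-2 * α * ∑ k ∈ Finset.Ico (t + 1) N, η k)
          ≤ c^2 * (((τ:ℝ)+1)^2/((N:ℝ)+1)^2) * ((1+2*α*c)/(2*α*c)) := by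
      calc ∑ t ∈ Finset.range τ,
            η t ^ 2 * Real.exp (-2 * α * ∑ k ∈ Finset.Ico (t + 1) N, η k)
          ≤ ∑ t ∈ Finset.range τ,
            c^2 * (((τ:ℝ)+1)^2/((N:ℝ)+1)^2) * Real.exp (-(2*α*c)) ^ (τ-1-t) :=
          Finset.sum_le_sum hterm2
        _ = c^2 * (((τ:ℝ)+1)^2/((N:ℝ)+1)^2)
              * ∑ t ∈ Finset.range τ, Real.exp (-(2*α*c)) ^ (τ-1-t) := by
          rw [Finset.mul_sum]
        _ = c^2 * (((τ:ℝ)+1)^2/((N:ℝ)+1)^2)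
              * ∑ j ∈ Finset.range τ, Real.exp (-(2*α*c)) ^ j := by
          rw [Finset.sum_range_reflect (fun j => Real.exp (-(2*α*c)) ^ j) τ]
        _ ≤ c^2 * (((τ:ℝ)+1)^2/((N:ℝ)+1)^2) * ((1+2*α*c)/(2*α*c)) :=
          mul_le_mul_of_nonneg_left (geomsum (2*α*c) (by positivity) τ) (by positivity)
    have key : α*c*(1+2*α*c)*((τ:ℝ)+1)^2 ≤ 4*(τ:ℝ)+8 := by
      have h2 : α*c*((τ:ℝ)+1) ≤ 2 := by nlinarith
      have hτ1R : (1:ℝ) ≤ (τ:ℝ) := by exact_mod_cast hτ1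
      have h3a : ((τ:ℝ)+1)^2 ≤ 4*(τ:ℝ)^2 := by nlinarith [sq_nonneg ((τ:ℝ)-1)]
      have h3b : α*c*((τ:ℝ)+1)^2 ≤ α*c*(4*(τ:ℝ)^2) := mul_le_mul_of_nonneg_left h3a hαc.le
      have h3 : α*c*((τ:ℝ)+1)^2 ≤ 4*(τ:ℝ) := by nlinarith
      have h4 : 2*(α*c*((τ:ℝ)+1))^2 ≤ 8 := by nlinarith [mul_nonneg hαc.le (by linarith : (0:ℝ) ≤ (τ:ℝ)+1)]
      nlinarith
    have hpart2' : c^2 * (((τ:ℝ)+1)^2/((N:ℝ)+1)^2) * ((1+2*α*c)/(2*α*c))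
        ≤ (2*(τ:ℝ)+4)/(α^2*((N:ℝ)+1)^2) := by
      have eL : c^2 * (((τ:ℝ)+1)^2/((N:ℝ)+1)^2) * ((1+2*α*c)/(2*α*c))
          = (α*c*(1+2*α*c)*((τ:ℝ)+1)^2) / (2*(α^2*((N:ℝ)+1)^2)) := by
        field_simp
      have eR : (2*(τ:ℝ)+4)/(α^2*((N:ℝ)+1)^2)
          = (4*(τ:ℝ)+8) / (2*(α^2*((N:ℝ)+1)^2)) := by
        rw [div_eq_div_iff (by positivity) (by positivity)]
        ring
      rw [eL, eR]
      exact div_le_div_of_nonneg_right key (by positivity)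
    have hsplit : (∑ t ∈ Finset.range N,
          η t ^ 2 * Real.exp (-2 * α * ∑ k ∈ Finset.Ico (t + 1) N, η k))
        = (∑ t ∈ Finset.range τ,
            η t ^ 2 * Real.exp (-2 * α * ∑ k ∈ Finset.Ico (t + 1) N, η k))
          + ∑ t ∈ Finset.Ico τ N,
            η t ^ 2 * Real.exp (-2 * α * ∑ k ∈ Finset.Ico (t + 1) N, η k) := by
      rw [Finset.range_eq_Ico, Finset.range_eq_Ico, Finset.sum_Ico_consecutive _ (Nat.zero_le τ) hτN]
    rw [hsplit]
    have hfinal : (2*(τ:ℝ)+4)/(α^2*((N:ℝ)+1)^2) + ((N:ℝ)-(τ:ℝ)) * (4/(α^2*((N:ℝ)+1)^2))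
        ≤ 4 / (α^2*(N:ℝ)) := by
      have eL : (2*(τ:ℝ)+4)/(α^2*((N:ℝ)+1)^2) + ((N:ℝ)-(τ:ℝ)) * (4/(α^2*((N:ℝ)+1)^2))
          = (4*(N:ℝ) - 2*(τ:ℝ) + 4)/(α^2*((N:ℝ)+1)^2) := by
        field_simp
        ring
      rw [eL, div_le_div_iff₀ (by positivity) (by positivity)]
      have hNN : (4*(N:ℝ) - 2*(τ:ℝ) + 4)*(N:ℝ) ≤ 4*((N:ℝ)+1)^2 := by nlinarith
      nlinarith [mul_le_mul_of_nonneg_left hNN (sq_nonneg α)]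
    calc (∑ t ∈ Finset.range τ,
            η t ^ 2 * Real.exp (-2 * α * ∑ k ∈ Finset.Ico (t + 1) N, η k))
          + ∑ t ∈ Finset.Ico τ N,
            η t ^ 2 * Real.exp (-2 * α * ∑ k ∈ Finset.Ico (t + 1) N, η k)
        ≤ c^2 * (((τ:ℝ)+1)^2/((N:ℝ)+1)^2) * ((1+2*α*c)/(2*α*c))
            + ((N:ℝ)-(τ:ℝ)) * (4/(α^2*((N:ℝ)+1)^2)) := add_le_add hpart2 hpart1
      _ ≤ (2*(τ:ℝ)+4)/(α^2*((N:ℝ)+1)^2) + ((N:ℝ)-(τ:ℝ)) * (4/(α^2*((N:ℝ)+1)^2)) := by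
          apply add_le_add_left hpart2'
      _ ≤ 4 / (α^2*(N:ℝ)) := hfinal
end

section
/- Let 0 < α ≤ β and define the step sizes η_k = min(1/(α(k+1)), min(1,2α)/β) for k ∈ ℕ. Then for every natural number N ≥ 1, exp( −2α·∑_{t=0}^{N−1} η_t ) ≤ ( 2β / (α·min(1,2α)·N) )². -/
/-- With step sizes `η_k = min(1/(α(k+1)), min(1,2α)/β)` for `0 < α ≤ β`, for every
`N ≥ 1`, `exp(-2α ∑_{t=0}^{N-1} η_t) ≤ (2β/(α·min(1,2α)·N))²`. -/
theorem stepsize_sum_exp_bound (α β : ℝ) (hα : 0 < α) (hαβ : α ≤ β)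
    (η : ℕ → ℝ)
    (hη : ∀ k : ℕ, η k = min (1 / (α * (k + 1))) (min 1 (2 * α) / β))
    (N : ℕ) (hN : 1 ≤ N) :
    Real.exp (-2 * α * ∑ t ∈ Finset.range N, η t)
      ≤ (2 * β / (α * min 1 (2 * α) * N)) ^ 2 := by
  have hβ : 0 < β := lt_of_lt_of_le hα hαβ
  set c : ℝ := min 1 (2 * α) with hc
  have hc0 : 0 < c := lt_min one_pos (by linarith)
  have hc1 : c ≤ 1 := min_le_left _ _
  set q : ℝ := α * c / β with hq
  have hq0 : 0 < q := by positivity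
  have hq1 : q ≤ 1 := by
    rw [hq, div_le_one hβ]
    nlinarith
  have hNpos : (0:ℝ) < N := by
    have : (1:ℝ) ≤ N := by exact_mod_cast hN
    linarith
  have key : ∀ t : ℕ, Real.log ((2 + q * (t+1)) / 2) - Real.log ((2 + q * t) / 2)
      ≤ α * η t := by
    intro t
    have htnn : (0:ℝ) ≤ (t:ℝ) := Nat.cast_nonneg t
    have ht0 : (0:ℝ) < 2 + q * t := by positivity
    have ht1 : (0:ℝ) < 2 + q * (t+1) := by positivity
    have hmin : α * η t = min (1 / ((t:ℝ) + 1)) q := by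
      rw [hη t, mul_min_of_nonneg _ _ hα.le]
      congr 1
      · rw [eq_div_iff (by positivity)]
        field_simp
      · rw [hq]
        field_simp
    rw [hmin]
    have hlog : Real.log ((2 + q * (t+1)) / 2) - Real.log ((2 + q * t) / 2)
        = Real.log ((2 + q * (t+1)) / (2 + q * t)) := by
      rw [Real.log_div ht1.ne' two_ne_zero, Real.log_div ht0.ne' two_ne_zero,
        Real.log_div ht1.ne' ht0.ne']
      ring
    rw [hlog]
    have h1 : Real.log ((2 + q * (t+1)) / (2 + q * t)) ≤ q / (2 + q * t) := by
      have h := Real.log_le_sub_one_of_pos (show (0:ℝ) < (2 + q * (t+1)) / (2 + q * t) by positivity)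
      have heq : (2 + q * (t+1)) / (2 + q * t) - 1 = q / (2 + q * t) := by
        field_simp
        ring
      linarith [heq ▸ h]
    refine h1.trans (le_min ?_ ?_)
    · rw [div_le_div_iff₀ ht0 (by positivity)]
      nlinarith
    · rw [div_le_iff₀ ht0]
      nlinarith [mul_nonneg hq0.le (mul_nonneg hq0.le htnn)]
  have hsum : Real.log ((2 + q * N) / 2) ≤ α * ∑ t ∈ Finset.range N, η t := by
    calc Real.log ((2 + q * N) / 2)
        = ∑ t ∈ Finset.range N,
            (Real.log ((2 + q * ((t:ℕ)+1:ℕ)) / 2) - Real.log ((2 + q * t) / 2)) := by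
          rw [Finset.sum_range_sub (fun t : ℕ => Real.log ((2 + q * t) / 2))]
          norm_num
      _ ≤ ∑ t ∈ Finset.range N, α * η t := Finset.sum_le_sum fun t _ => by
          have h := key t
          push_cast
          linarith
      _ = α * ∑ t ∈ Finset.range N, η t := (Finset.mul_sum _ _ _).symm
  have hfin : Real.log (q * N / 2) ≤ α * ∑ t ∈ Finset.range N, η t := by
    refine le_trans (Real.log_le_log (by positivity) ?_) hsum
    linarith
  -- conclude
  have hRHS : (2 * β / (α * c * N)) ^ 2 = ((q * N / 2)⁻¹) ^ 2 := by
    rw [hq]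
    field_simp
  rw [hRHS]
  have hpos : (0:ℝ) < ((q * N / 2)⁻¹) ^ 2 := by positivity
  rw [← Real.exp_log hpos, Real.exp_le_exp]
  have : Real.log (((q * N / 2)⁻¹) ^ 2) = -2 * Real.log (q * N / 2) := by
    rw [Real.log_pow, Real.log_inv]
    push_cast
    ring
  rw [this]
  nlinarith [hfin]
end
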